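/- arXiv:2501.09689 — 3 statements merged into one kernel-verified Lean document; each statement's English description precedes it below -/
import Mathlib

section
/- Contraction-depth and contraction*-depth are functionally equivalent: for every representable matroid M, csd(M) ≤ cd(M) ≤ (1/2)(2^{2·csd(M)} + 2^{csd(M)}). -/
/-!
A represented matroid is given by its family of column vectors
`w : ι → (Fin m → F)`.  Independence is considered relative to a subspace `K`
of contracted vectors, and relative to a ground subset `S ⊆ ι`
(the restriction `M[S]`), following the definition of `csd(A, {v₁,…,vₖ})`.
-/

/-- `D` is a dependent subset of the ground set `S` in the matroid of the
columns `w` contracted by the subspace `K`: some nontrivial linear combination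
of the columns in `D` lies in `K`. -/
def depOn {F : Type*} [Field F] {ι : Type*} [Fintype ι] {m : ℕ}
    (w : ι → Fin m → F) (K : Submodule F (Fin m → F)) (S D : Set ι) : Prop :=
  D ⊆ S ∧ ∃ c : ι → F, (∀ i ∉ D, c i = 0) ∧ c ≠ 0 ∧ (∑ i, c i • w i) ∈ K

/-- A circuit: a minimal dependent set. -/
def circuitOn {F : Type*} [Field F] {ι : Type*} [Fintype ι] {m : ℕ}
    (w : ι → Fin m → F) (K : Submodule F (Fin m → F)) (S C : Set ι) : Prop :=
  depOn w K S C ∧ ∀ D ⊂ C, ¬ depOn w K S D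

/-- Two elements of `S` lie in a common circuit (or are equal). -/
def relOn {F : Type*} [Field F] {ι : Type*} [Fintype ι] {m : ℕ}
    (w : ι → Fin m → F) (K : Submodule F (Fin m → F)) (S : Set ι)
    (e f : ι) : Prop :=
  e = f ∨ ∃ C, circuitOn w K S C ∧ e ∈ C ∧ f ∈ C

/-- The matroid restricted to `S` (contracted by `K`) is connected. -/
def connOn {F : Type*} [Field F] {ι : Type*} [Fintype ι] {m : ℕ}
    (w : ι → Fin m → F) (K : Submodule F (Fin m → F)) (S : Set ι) : Prop :=
  ∀ e ∈ S, ∀ f ∈ S, relOn w K S e f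

/-- `CsdLE w S K d`: the contraction*-depth of the matroid of the columns
`w i`, `i ∈ S`, contracted by `K`, is at most `d`.  (Rank `0` gives `0`;
a disconnected matroid gives the maximum over connected components;
a connected matroid gives `1` plus the minimum over contractions by a single
arbitrary vector `v` of the ambient space.) -/
inductive CsdLE {F : Type*} [Field F] {ι : Type*} [Fintype ι] {m : ℕ}
    (w : ι → Fin m → F) : Set ι → Submodule F (Fin m → F) → ℕ → Prop
  | rank0 (S K d) : (∀ i ∈ S, w i ∈ K) → CsdLE w S K d
  | comp (S K d) : ¬ connOn w K S →
      (∀ e ∈ S, CsdLE w {f ∈ S | relOn w K S e f} K d) → CsdLE w S K d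
  | contr (S K d v) : connOn w K S →
      CsdLE w S (K ⊔ Submodule.span F {v}) d → CsdLE w S K (d + 1)

/-- `CdLEr w S K d`: the contraction-depth of the matroid of the columns
`w i`, `i ∈ S`, contracted by `K`, is at most `d`.  (A single element gives
`1`; a disconnected matroid gives the maximum over connected components; a
connected matroid gives `1` plus the minimum over contractions of a single
element of the matroid.) -/
inductive CdLEr {F : Type*} [Field F] {ι : Type*} [Fintype ι] {m : ℕ}
    (w : ι → Fin m → F) : Set ι → Submodule F (Fin m → F) → ℕ → Prop
  | empty (S K d) : S = ∅ → CdLEr w S K d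
  | single (S K d e) : S = {e} → CdLEr w S K (d + 1)
  | comp (S K d) : ¬ connOn w K S →
      (∀ e ∈ S, CdLEr w {f ∈ S | relOn w K S e f} K d) → CdLEr w S K d
  | contr (S K d e) : connOn w K S → e ∈ S →
      CdLEr w (S \ {e}) (K ⊔ Submodule.span F {w e}) d → CdLEr w S K (d + 1)

/-- The contraction*-depth of `M(A)[S]/K`. -/
noncomputable def csdR {F : Type*} [Field F] {ι : Type*} [Fintype ι] {m : ℕ}
    (w : ι → Fin m → F) (S : Set ι) (K : Submodule F (Fin m → F)) : ℕ :=
  sInf {d | CsdLE w S K d}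

/-- The contraction-depth of `M(A)[S]/K`. -/
noncomputable def cdR {F : Type*} [Field F] {ι : Type*} [Fintype ι] {m : ℕ}
    (w : ι → Fin m → F) (S : Set ι) (K : Submodule F (Fin m → F)) : ℕ :=
  sInf {d | CdLEr w S K d}

set_option linter.unusedSectionVars false

section Tools
variable {F : Type*} [Field F] {ι : Type*} [Fintype ι] {m : ℕ}

/-- linear combination of the columns -/
def lc (w : ι → Fin m → F) (c : ι → F) : Fin m → F := ∑ i, c i • w i

/-- support of a coefficient vector -/
def spt (c : ι → F) : Set ι := {i | c i ≠ 0}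

variable {w : ι → Fin m → F} {K : Submodule F (Fin m → F)} {S D C : Set ι}

lemma mem_spt {c : ι → F} {i : ι} : i ∈ spt c ↔ c i ≠ 0 := Iff.rfl

lemma spt_nonempty {c : ι → F} (h : c ≠ 0) : (spt c).Nonempty := by
  rcases Function.ne_iff.1 h with ⟨i, hi⟩
  exact ⟨i, by simpa [mem_spt] using hi⟩

lemma ne_zero_of_spt {c : ι → F} {i : ι} (hi : c i ≠ 0) : c ≠ 0 := by
  intro h; rw [h] at hi; simp at hi

lemma lc_sub (w : ι → Fin m → F) (c d : ι → F) : lc w (c - d) = lc w c - lc w d := by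
  simp [lc, sub_smul, Finset.sum_sub_distrib]

lemma lc_add (w : ι → Fin m → F) (c d : ι → F) : lc w (c + d) = lc w c + lc w d := by
  simp [lc, add_smul, Finset.sum_add_distrib]

lemma lc_smul (w : ι → Fin m → F) (a : F) (c : ι → F) : lc w (a • c) = a • lc w c := by
  simp [lc, Finset.smul_sum, smul_smul]

lemma depOn_iff :
    depOn w K S D ↔ D ⊆ S ∧ ∃ c : ι → F, spt c ⊆ D ∧ c ≠ 0 ∧ lc w c ∈ K := by
  unfold depOn lc
  refine and_congr_right fun _ => exists_congr fun c => and_congr_left fun _ => ?_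
  constructor
  · intro h i hi; by_contra hiD; exact hi (h i hiD)
  · intro h i hiD; by_contra hci; exact hiD (h hci)

lemma depOn.subset_ground (h : depOn w K S D) : D ⊆ S := h.1

lemma depOn.nonempty (h : depOn w K S D) : D.Nonempty := by
  rw [depOn_iff] at h
  obtain ⟨-, c, hc, hc0, -⟩ := h
  exact (spt_nonempty hc0).mono hc

lemma depOn_of_spt (hDS : D ⊆ S) {c : ι → F} (hc : spt c ⊆ D) (hc0 : c ≠ 0)
    (hlc : lc w c ∈ K) : depOn w K S D :=
  depOn_iff.2 ⟨hDS, c, hc, hc0, hlc⟩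

/-- dependence does not depend on the ambient set -/
lemma depOn_ambient {S' : Set ι} (hD : D ⊆ S') (h : depOn w K S D) : depOn w K S' D := by
  rw [depOn_iff] at h ⊢
  exact ⟨hD, h.2⟩

lemma circuitOn.dep (h : circuitOn w K S C) : depOn w K S C := h.1

lemma circuitOn.subset_ground (h : circuitOn w K S C) : C ⊆ S := h.1.1

lemma circuitOn.nonempty (h : circuitOn w K S C) : C.Nonempty := h.1.nonempty

/-- a dependent subset of a circuit is the whole circuit -/
lemma circuitOn.eq_of_dep (h : circuitOn w K S C) (hD : depOn w K S D) (hDC : D ⊆ C) :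
    D = C := by
  by_contra hne
  exact h.2 D (HasSubset.Subset.ssubset_of_ne hDC hne) hD

/-- circuits do not depend on the ambient set -/
lemma circuitOn_ambient {S' : Set ι} (hC : C ⊆ S') (h : circuitOn w K S C) :
    circuitOn w K S' C := by
  refine ⟨depOn_ambient hC h.1, fun D hD hdep => ?_⟩
  exact h.2 D hD (depOn_ambient (hD.subset.trans h.subset_ground) hdep)

/-- L1 : any support element of a dependency vector lies in a circuit inside the support -/
lemma exists_circuit_of_vec :
    ∀ (n : ℕ) (c : ι → F), (spt c).ncard ≤ n → spt c ⊆ S → lc w c ∈ K → ∀ e, c e ≠ 0 →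
      ∃ C, circuitOn w K S C ∧ e ∈ C ∧ C ⊆ spt c := by
  intro n
  induction n with
  | zero =>
      intro c hn _ _ e he
      have : e ∈ spt c := he
      have : (spt c).Nonempty := ⟨e, this⟩
      have := this.ncard_pos (Set.toFinite _)
      omega
  | succ n ih =>
      intro c hn hS hlc e he
      by_cases hcirc : circuitOn w K S (spt c)
      · exact ⟨spt c, hcirc, he, subset_rfl⟩
      · have hdep : depOn w K S (spt c) :=
          depOn_of_spt hS subset_rfl (ne_zero_of_spt he) hlc
        have : ∃ D, D ⊂ spt c ∧ depOn w K S D := by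
          by_contra hno
          push_neg at hno
          exact hcirc ⟨hdep, fun D hD => hno D hD⟩
        obtain ⟨D, hDsub, hDdep⟩ := this
        rw [depOn_iff] at hDdep
        obtain ⟨-, c', hc'spt, hc'0, hc'lc⟩ := hDdep
        have hc'sub : spt c' ⊆ spt c := hc'spt.trans hDsub.subset
        by_cases hce : c' e ≠ 0
        · have hlt : (spt c').ncard ≤ n := by
            have h1 : (spt c').ncard ≤ D.ncard := Set.ncard_le_ncard hc'spt (Set.toFinite _)
            have h2 : D.ncard < (spt c).ncard := Set.ncard_lt_ncard hDsub (Set.toFinite _)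
            omega
          obtain ⟨C, hC, heC, hCs⟩ := ih c' hlt (hc'sub.trans hS) hc'lc e hce
          exact ⟨C, hC, heC, hCs.trans hc'sub⟩
        · push_neg at hce
          obtain ⟨y, hy⟩ := spt_nonempty hc'0
          rw [mem_spt] at hy
          set c'' : ι → F := c - (c y / c' y) • c' with hc''
          have hce'' : c'' e ≠ 0 := by
            simp [hc'', hce, he]
          have hcy'' : c'' y = 0 := by
            rw [hc'']; simp only [Pi.sub_apply, Pi.smul_apply, smul_eq_mul, div_mul_cancel₀ _ hy, sub_self]
          have hsub'' : spt c'' ⊆ spt c \ {y} := by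
            intro i hi
            rw [mem_spt] at hi
            have hci : c i ≠ 0 := by
              intro hci0
              have h2 : c' i = 0 := by
                by_contra hne
                exact (hc'sub hne : c i ≠ 0) hci0
              exact hi (by simp [hc'', hci0, h2])
            refine ⟨hci, fun hiy => ?_⟩
            rw [Set.mem_singleton_iff] at hiy
            subst hiy
            exact hi hcy''
          have hycard : (spt c'').ncard ≤ n := by
            have h1 : (spt c'').ncard ≤ (spt c \ {y}).ncard :=
              Set.ncard_le_ncard hsub'' (Set.toFinite _)
            have h2 : (spt c \ {y}).ncard < (spt c).ncard :=
              Set.ncard_lt_ncard (by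
                refine ⟨Set.diff_subset, fun hsub => ?_⟩
                have := hsub (hc'sub hy)
                simp at this) (Set.toFinite _)
            omega
          have hlc'' : lc w c'' ∈ K := by
            rw [hc'', lc_sub, lc_smul]
            exact Submodule.sub_mem _ hlc (Submodule.smul_mem _ _ hc'lc)
          obtain ⟨C, hC, heC, hCsub⟩ :=
            ih c'' hycard ((hsub''.trans Set.diff_subset).trans hS) hlc'' e hce''
          exact ⟨C, hC, heC, hCsub.trans (hsub''.trans Set.diff_subset)⟩

lemma exists_circuit_of_vec' {c : ι → F} (hS : spt c ⊆ S) (hlc : lc w c ∈ K)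
    {e : ι} (he : c e ≠ 0) :
    ∃ C, circuitOn w K S C ∧ e ∈ C ∧ C ⊆ spt c :=
  exists_circuit_of_vec (spt c).ncard c le_rfl hS hlc e he

/-- every circuit has a vector supported exactly on it -/
lemma circuitOn.exists_vec (h : circuitOn w K S C) :
    ∃ c : ι → F, spt c = C ∧ lc w c ∈ K := by
  obtain ⟨hCS, c, hcspt, hc0, hlc⟩ := depOn_iff.1 h.1
  refine ⟨c, ?_, hlc⟩
  by_contra hne
  have hss : spt c ⊂ C := HasSubset.Subset.ssubset_of_ne hcspt hne
  exact h.2 (spt c) hss (depOn_of_spt (hcspt.trans hCS) subset_rfl hc0 hlc)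

end Tools

section Tools2
variable {F : Type*} [Field F] {ι : Type*} [Fintype ι] {m : ℕ}
variable {w : ι → Fin m → F} {K : Submodule F (Fin m → F)} {S D C X : Set ι}

/-- span of a set of columns -/
def SpanW (w : ι → Fin m → F) (X : Set ι) : Submodule F (Fin m → F) :=
  Submodule.span F (w '' X)

lemma spt_add_subset (c d : ι → F) : spt (c + d) ⊆ spt c ∪ spt d := by
  intro i hi
  rw [mem_spt] at hi
  by_contra hc
  rw [Set.mem_union] at hc
  push_neg at hc
  obtain ⟨h1, h2⟩ := hc
  rw [mem_spt, not_not] at h1 h2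
  exact hi (by simp [h1, h2])

lemma spt_smul_subset (a : F) (c : ι → F) : spt (a • c) ⊆ spt c := by
  intro i hi
  rw [mem_spt] at hi ⊢
  intro h
  exact hi (by simp [h])

lemma lc_mem_SpanW {a : ι → F} (ha : spt a ⊆ X) : lc w a ∈ SpanW w X := by
  refine Submodule.sum_mem _ fun i _ => ?_
  by_cases hi : a i = 0
  · simp [hi]
  · exact Submodule.smul_mem _ _ (Submodule.subset_span ⟨i, ha hi, rfl⟩)

lemma mem_SpanW_iff {v : Fin m → F} :
    v ∈ SpanW w X ↔ ∃ a : ι → F, spt a ⊆ X ∧ lc w a = v := by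
  classical
  constructor
  · intro hv
    induction hv using Submodule.span_induction with
    | mem x hx =>
        obtain ⟨i, hiX, rfl⟩ := hx
        refine ⟨fun j => if i = j then 1 else 0, ?_, ?_⟩
        · intro j hj
          rw [mem_spt] at hj
          have hij : i = j := by
            by_contra hji
            exact hj (if_neg hji)
          exact hij ▸ hiX
        · simp [lc, ite_smul, Finset.sum_ite_eq]
    | zero => exact ⟨0, by simp [spt], by simp [lc]⟩
    | add x y hx hy ihx ihy =>
        obtain ⟨a, ha, rfl⟩ := ihx
        obtain ⟨b, hb, rfl⟩ := ihy
        exact ⟨a + b, (spt_add_subset a b).trans (Set.union_subset ha hb), lc_add w a b⟩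
    | smul r x hx ihx =>
        obtain ⟨a, ha, rfl⟩ := ihx
        exact ⟨r • a, (spt_smul_subset r a).trans ha, lc_smul w r a⟩
  · rintro ⟨a, ha, rfl⟩
    exact lc_mem_SpanW ha

lemma SpanW_singleton (e : ι) : SpanW w {e} = Submodule.span F {w e} := by
  unfold SpanW
  rw [Set.image_singleton]

lemma SpanW_insert (e : ι) (X : Set ι) :
    SpanW w (insert e X) = Submodule.span F {w e} ⊔ SpanW w X := by
  unfold SpanW
  rw [Set.image_insert_eq, Submodule.span_insert]

lemma mem_sup_SpanW_iff {v : Fin m → F} :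
    v ∈ K ⊔ SpanW w X ↔ ∃ a : ι → F, spt a ⊆ X ∧ v - lc w a ∈ K := by
  rw [Submodule.mem_sup]
  constructor
  · rintro ⟨y, hy, z, hz, rfl⟩
    obtain ⟨a, ha, rfl⟩ := mem_SpanW_iff.1 hz
    exact ⟨a, ha, by simpa using hy⟩
  · rintro ⟨a, ha, hk⟩
    exact ⟨v - lc w a, hk, lc w a, lc_mem_SpanW ha, by abel⟩

lemma mem_sup_span_singleton_iff {v u : Fin m → F} :
    v ∈ K ⊔ Submodule.span F {u} ↔ ∃ t : F, v - t • u ∈ K := by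
  rw [Submodule.mem_sup]
  constructor
  · rintro ⟨y, hy, z, hz, rfl⟩
    obtain ⟨t, rfl⟩ := Submodule.mem_span_singleton.1 hz
    exact ⟨t, by simpa using hy⟩
  · rintro ⟨t, hk⟩
    exact ⟨v - t • u, hk, t • u, Submodule.mem_span_singleton.2 ⟨t, rfl⟩, by abel⟩

/-- residue of a circuit after contracting the columns of `X` -/
lemma residue_circuit {S₂ S₃ : Set ι} (hD : circuitOn w K S₂ D) {t : ι}
    (ht : t ∈ D) (htX : t ∉ X) (hS₃ : D \ X ⊆ S₃) :
    ∃ H, circuitOn w (K ⊔ SpanW w X) S₃ H ∧ t ∈ H ∧ H ⊆ D \ X := by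
  classical
  obtain ⟨u, huspt, hulc⟩ := hD.exists_vec
  set c' : ι → F := fun i => if i ∈ X then 0 else u i with hc'
  set a : ι → F := fun i => if i ∈ X then u i else 0 with ha
  have hsum : c' = u - a := by
    funext i
    by_cases hi : i ∈ X <;> simp [hc', ha, hi]
  have hlc' : lc w c' ∈ K ⊔ SpanW w X := by
    rw [hsum, lc_sub]
    refine Submodule.sub_mem _ (Submodule.mem_sup_left hulc) (Submodule.mem_sup_right ?_)
    refine lc_mem_SpanW ?_
    intro i hi
    rw [mem_spt] at hi
    by_contra hiX
    exact hi (by simp [ha, hiX])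
  have hct : c' t ≠ 0 := by
    have : u t ≠ 0 := by rw [← huspt] at ht; exact ht
    simpa [hc', htX] using this
  have hspt : spt c' ⊆ D \ X := by
    intro i hi
    rw [mem_spt] at hi
    by_cases hiX : i ∈ X
    · exact absurd (by simp [hc', hiX]) hi
    · refine ⟨?_, hiX⟩
      rw [← huspt, mem_spt]
      intro hu
      exact hi (by simp [hc', hiX, hu])
  obtain ⟨H, h1, h2, h3⟩ := exists_circuit_of_vec' (hspt.trans hS₃) hlc' hct
  exact ⟨H, h1, h2, h3.trans hspt⟩

/-- helper : two coefficient functions differing only at `e` -/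
lemma lc_single_diff {c d : ι → F} {e : ι} (h : ∀ i, i ≠ e → c i = d i) :
    lc w c = lc w d + (c e - d e) • w e := by
  have hs : lc w (c - d) = (c e - d e) • w e := by
    unfold lc
    rw [Finset.sum_eq_single e]
    · simp
    · intro b _ hb
      simp [h b hb]
    · intro hb
      exact absurd (Finset.mem_univ e) hb
  have h2 := lc_sub w c d
  rw [hs] at h2
  rw [h2]
  abel

/-- lift of a circuit of the single-element contraction -/
lemma lift_circuit_single {e : ι} {S₁ S' : Set ι}
    (hD : circuitOn w (K ⊔ Submodule.span F {w e}) S₁ D)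
    (heD : e ∉ D) (hS : D ⊆ S') (heS : e ∈ S') :
    ∃ D', circuitOn w K S' D' ∧ D ⊆ D' ∧ D' ⊆ D ∪ {e} := by
  classical
  obtain ⟨u, huspt, hulc⟩ := hD.exists_vec
  obtain ⟨t, htk⟩ := mem_sup_span_singleton_iff.1 hulc
  set u' : ι → F := fun i => if i = e then -t else u i with hu'
  have hue : u e = 0 := by
    by_contra h
    exact heD (huspt ▸ h)
  have hlc' : lc w u' ∈ K := by
    have hdiff : ∀ i, i ≠ e → u' i = u i := fun i hi => by simp [hu', hi]
    have := lc_single_diff (w := w) hdiff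
    rw [this]
    have : u' e - u e = -t := by simp [hu', hue]
    rw [this]
    simpa [neg_smul, sub_eq_add_neg] using htk
  obtain ⟨t₀, ht₀⟩ := hD.nonempty
  have ht₀e : t₀ ≠ e := fun h => heD (h ▸ ht₀)
  have hut₀ : u' t₀ ≠ 0 := by
    have htu : t₀ ∈ spt u := by rw [huspt]; exact ht₀
    rw [mem_spt] at htu
    simpa [hu', ht₀e] using htu
  have hsptu' : spt u' ⊆ D ∪ {e} := by
    intro i hi
    rw [mem_spt] at hi
    by_cases hie : i = e
    · exact Or.inr (by simp [hie])
    · refine Or.inl ?_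
      rw [← huspt, mem_spt]
      intro h0
      exact hi (by simp [hu', hie, h0])
  have hsptS : spt u' ⊆ S' := hsptu'.trans (Set.union_subset hS (by simpa using heS))
  obtain ⟨D', hD', ht₀D', hD'sub⟩ := exists_circuit_of_vec' hsptS hlc' hut₀
  have hD'sub2 : D' ⊆ D ∪ {e} := hD'sub.trans hsptu'
  refine ⟨D', hD', ?_, hD'sub2⟩
  -- show D ⊆ D'
  obtain ⟨H, hH, htH, hHsub⟩ :=
    residue_circuit (X := {e}) hD' ht₀D' (by simpa using ht₀e)
      (S₃ := S₁) (by
        intro i hi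
        have hiD : i ∈ D := by
          rcases hD'sub2 hi.1 with h | h
          · exact h
          · exact absurd h hi.2
        exact hD.subset_ground hiD)
  have hHD : H ⊆ D := by
    intro i hi
    rcases hD'sub2 (hHsub hi).1 with h | h
    · exact h
    · exact absurd h (hHsub hi).2
  have hHdep : depOn w (K ⊔ Submodule.span F {w e}) S₁ H := by
    have := hH.dep
    rwa [SpanW_singleton] at this
  have : H = D := hD.eq_of_dep hHdep hHD
  rw [← this]
  exact fun i hi => ((hHsub (this ▸ hi)) : _ ∈ D' \ {e}).1

end Tools2

section Tools3
variable {F : Type*} [Field F] {ι : Type*} [Fintype ι] {m : ℕ}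
variable {w : ι → Fin m → F} {K : Submodule F (Fin m → F)} {S D C : Set ι} {e f g : ι}

lemma relOn_refl (e : ι) : relOn w K S e e := Or.inl rfl

lemma relOn_symm (h : relOn w K S e f) : relOn w K S f e := by
  rcases h with h | ⟨C, hC, he, hf⟩
  · exact Or.inl h.symm
  · exact Or.inr ⟨C, hC, hf, he⟩

lemma relOn_of_circuit (hC : circuitOn w K S C) (he : e ∈ C) (hf : f ∈ C) :
    relOn w K S e f := Or.inr ⟨C, hC, he, hf⟩

lemma relOn_mono_ambient {S' : Set ι} (hS : S ⊆ S') (h : relOn w K S e f) :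
    relOn w K S' e f := by
  rcases h with h | ⟨C, hC, he, hf⟩
  · exact Or.inl h
  · exact Or.inr ⟨C, circuitOn_ambient (hC.subset_ground.trans hS) hC, he, hf⟩

/-- The key transitivity engine: two intersecting circuits yield a common circuit
through prescribed elements. -/
lemma common_circuit :
    ∀ (n : ℕ) (C1 C2 : Set ι) (e g : ι), (C1 ∪ C2).ncard ≤ n →
      circuitOn w K S C1 → circuitOn w K S C2 → e ∈ C1 → g ∈ C2 → (C1 ∩ C2).Nonempty →
      ∃ C, circuitOn w K S C ∧ e ∈ C ∧ g ∈ C := by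
  intro n
  induction n using Nat.strong_induction_on with
  | _ n ih =>
    intro C1 C2 e g hn h1 h2 he hg hint
    by_cases hgC1 : g ∈ C1
    · exact ⟨C1, h1, he, hgC1⟩
    by_cases heC2 : e ∈ C2
    · exact ⟨C2, h2, heC2, hg⟩
    obtain ⟨h, hhC1, hhC2⟩ := hint
    obtain ⟨u1, hu1spt, hu1lc⟩ := h1.exists_vec
    obtain ⟨u2, hu2spt, hu2lc⟩ := h2.exists_vec
    have hu1h : u1 h ≠ 0 := by rw [← hu1spt] at hhC1; exact hhC1
    have hu2h : u2 h ≠ 0 := by rw [← hu2spt] at hhC2; exact hhC2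
    have hu1e : u1 e ≠ 0 := by rw [← hu1spt] at he; exact he
    have hu2g : u2 g ≠ 0 := by rw [← hu2spt] at hg; exact hg
    have hu2e : u2 e = 0 := by
      by_contra hne
      exact heC2 (hu2spt ▸ (hne : e ∈ spt u2))
    have hu1g : u1 g = 0 := by
      by_contra hne
      exact hgC1 (hu1spt ▸ (hne : g ∈ spt u1))
    set z : ι → F := (u2 h) • u1 - (u1 h) • u2 with hz
    have hze : z e ≠ 0 := by
      simp only [hz, Pi.sub_apply, Pi.smul_apply, smul_eq_mul, hu2e, mul_zero, sub_zero]
      exact mul_ne_zero hu2h hu1e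
    have hzg : z g ≠ 0 := by
      simp only [hz, Pi.sub_apply, Pi.smul_apply, smul_eq_mul, hu1g, mul_zero, zero_sub,
        neg_ne_zero]
      exact mul_ne_zero hu1h hu2g
    have hzh : z h = 0 := by
      simp only [hz, Pi.sub_apply, Pi.smul_apply, smul_eq_mul]
      ring
    have hzspt : spt z ⊆ (C1 ∪ C2) \ {h} := by
      intro i hi
      rw [mem_spt] at hi
      constructor
      · by_contra hiu
        rw [Set.mem_union] at hiu
        push_neg at hiu
        have h1' : u1 i = 0 := by
          by_contra hne; exact hiu.1 (hu1spt ▸ (hne : i ∈ spt u1))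
        have h2' : u2 i = 0 := by
          by_contra hne; exact hiu.2 (hu2spt ▸ (hne : i ∈ spt u2))
        exact hi (by simp [hz, h1', h2'])
      · intro hih
        rw [Set.mem_singleton_iff] at hih
        subst hih
        exact hi hzh
    have hzS : spt z ⊆ S :=
      (hzspt.trans Set.diff_subset).trans
        (Set.union_subset h1.subset_ground h2.subset_ground)
    have hzlc : lc w z ∈ K := by
      rw [hz, lc_sub, lc_smul, lc_smul]
      exact Submodule.sub_mem _ (Submodule.smul_mem _ _ hu1lc) (Submodule.smul_mem _ _ hu2lc)
    obtain ⟨A, hA, heA, hAspt⟩ := exists_circuit_of_vec' hzS hzlc hze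
    obtain ⟨B, hB, hgB, hBspt⟩ := exists_circuit_of_vec' hzS hzlc hzg
    have hAsub : A ⊆ (C1 ∪ C2) \ {h} := hAspt.trans hzspt
    have hBsub : B ⊆ (C1 ∪ C2) \ {h} := hBspt.trans hzspt
    have hAC2 : (A ∩ C2).Nonempty := by
      rw [Set.nonempty_iff_ne_empty]
      intro hopp
      have hAC1 : A ⊆ C1 := by
        intro x hx
        rcases (hAsub hx).1 with h' | h'
        · exact h'
        · exact absurd (Set.mem_inter hx h') (by rw [hopp]; exact id)
      have : A = C1 := h1.eq_of_dep hA.dep hAC1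
      exact (hAsub (this ▸ hhC1)).2 rfl
    have hBC1 : (B ∩ C1).Nonempty := by
      rw [Set.nonempty_iff_ne_empty]
      intro hopp
      have hBC2 : B ⊆ C2 := by
        intro x hx
        rcases (hBsub hx).1 with h' | h'
        · exact absurd (Set.mem_inter hx h') (by rw [hopp]; exact id)
        · exact h'
      have : B = C2 := h2.eq_of_dep hB.dep hBC2
      exact (hBsub (this ▸ hhC2)).2 rfl
    have hcard : ((C1 ∪ C2) \ {h}).ncard < n := by
      have h1' : ((C1 ∪ C2) \ {h}).ncard < (C1 ∪ C2).ncard := by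
        refine Set.ncard_lt_ncard ?_ (Set.toFinite _)
        refine ⟨Set.diff_subset, fun hsub => ?_⟩
        exact (hsub (Set.mem_union_left _ hhC1)).2 rfl
      omega
    by_cases hAB : (A ∩ B).Nonempty
    · refine ih ((A ∪ B).ncard) ?_ A B e g le_rfl hA hB heA hgB hAB
      calc (A ∪ B).ncard ≤ ((C1 ∪ C2) \ {h}).ncard :=
              Set.ncard_le_ncard (Set.union_subset hAsub hBsub) (Set.toFinite _)
        _ < n := hcard
    · by_cases hACeq : A ∪ C2 = C1 ∪ C2
      · have hC1A : C1 \ C2 ⊆ A := by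
          intro x hx
          have : x ∈ A ∪ C2 := hACeq ▸ (Set.mem_union_left _ hx.1)
          rcases this with h' | h'
          · exact h'
          · exact absurd h' hx.2
        by_cases hBCeq : C1 ∪ B = C1 ∪ C2
        · -- contradiction branch
          exfalso
          have hC2B : C2 \ C1 ⊆ B := by
            intro x hx
            have : x ∈ C1 ∪ B := hBCeq ▸ (Set.mem_union_right _ hx.1)
            rcases this with h' | h'
            · exact absurd h' hx.2
            · exact h'
          have hBC2' : B ⊆ C2 := by
            intro x hx
            rcases (hBsub hx).1 with h' | h'
            · by_cases hx2 : x ∈ C2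
              · exact hx2
              · exact absurd (Set.mem_inter (hC1A ⟨h', hx2⟩) hx)
                  (by rw [Set.not_nonempty_iff_eq_empty] at hAB; rw [hAB]; exact id)
            · exact h'
          have : B = C2 := h2.eq_of_dep hB.dep hBC2'
          exact (hBsub (this ▸ hhC2)).2 rfl
        · -- recurse on (C1, B)
          have hsub : C1 ∪ B ⊆ C1 ∪ C2 :=
            Set.union_subset (Set.subset_union_left)
              (hBsub.trans (Set.diff_subset.trans subset_rfl))
          have hlt : (C1 ∪ B).ncard < n := by
            have : (C1 ∪ B).ncard < (C1 ∪ C2).ncard :=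
              Set.ncard_lt_ncard (HasSubset.Subset.ssubset_of_ne hsub hBCeq) (Set.toFinite _)
            omega
          exact ih ((C1 ∪ B).ncard) hlt C1 B e g le_rfl h1 hB he hgB
            (hBC1.mono (by intro x hx; exact ⟨hx.2, hx.1⟩))
      · -- recurse on (A, C2)
        have hsub : A ∪ C2 ⊆ C1 ∪ C2 :=
          Set.union_subset (hAsub.trans (Set.diff_subset.trans subset_rfl))
            (Set.subset_union_right)
        have hlt : (A ∪ C2).ncard < n := by
          have : (A ∪ C2).ncard < (C1 ∪ C2).ncard :=
            Set.ncard_lt_ncard (HasSubset.Subset.ssubset_of_ne hsub hACeq) (Set.toFinite _)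
          omega
        exact ih ((A ∪ C2).ncard) hlt A C2 e g le_rfl hA h2 heA hg hAC2

lemma relOn_trans (h1 : relOn w K S e f) (h2 : relOn w K S f g) : relOn w K S e g := by
  rcases h1 with rfl | ⟨C1, hC1, he1, hf1⟩
  · exact h2
  rcases h2 with rfl | ⟨C2, hC2, hf2, hg2⟩
  · exact Or.inr ⟨C1, hC1, he1, hf1⟩
  obtain ⟨C, hC, heC, hgC⟩ :=
    common_circuit ((C1 ∪ C2).ncard) C1 C2 e g le_rfl hC1 hC2 he1 hg2 ⟨f, hf1, hf2⟩
  exact Or.inr ⟨C, hC, heC, hgC⟩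

/-- component (equivalence class) lemmas -/
lemma cls_eq_of_rel (h : relOn w K S e f) :
    {x ∈ S | relOn w K S e x} = {x ∈ S | relOn w K S f x} := by
  ext x
  exact and_congr_right fun _ =>
    ⟨fun hx => relOn_trans (relOn_symm h) hx, fun hx => relOn_trans h hx⟩

lemma circuit_subset_cls (hC : circuitOn w K S C) (he : e ∈ C) :
    C ⊆ {x ∈ S | relOn w K S e x} :=
  fun x hx => ⟨hC.subset_ground hx, relOn_of_circuit hC he hx⟩

lemma connOn_cls (e : ι) : connOn w K {x ∈ S | relOn w K S e x} := by
  intro a ha b hb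
  have hab : relOn w K S a b := relOn_trans (relOn_symm ha.2) hb.2
  rcases hab with rfl | ⟨C, hC, haC, hbC⟩
  · exact Or.inl rfl
  · have hCsub : C ⊆ {x ∈ S | relOn w K S e x} := by
      have := circuit_subset_cls hC haC
      rwa [← cls_eq_of_rel ha.2] at this
    exact Or.inr ⟨C, circuitOn_ambient hCsub hC, haC, hbC⟩

lemma cls_ssubset (hnc : ¬ connOn w K S) (he : e ∈ S) :
    {x ∈ S | relOn w K S e x} ⊂ S := by
  unfold connOn at hnc
  push_neg at hnc
  obtain ⟨a, ha, b, hb, hab⟩ := hnc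
  refine ⟨fun x hx => hx.1, fun hsub => ?_⟩
  have ha' : relOn w K S e a := (hsub ha).2
  have hb' : relOn w K S e b := (hsub hb).2
  exact hab (relOn_trans (relOn_symm ha') hb')

/-- a circuit inside the class is a circuit, and conversely -/
lemma circuitOn_cls_iff (hC : C ⊆ {x ∈ S | relOn w K S e x}) :
    circuitOn w K {x ∈ S | relOn w K S e x} C ↔ circuitOn w K S C :=
  ⟨fun h => circuitOn_ambient (hC.trans fun x hx => hx.1) h,
   fun h => circuitOn_ambient hC h⟩

end Tools3

section Tools4
variable {F : Type*} [Field F] {ι : Type*} [Fintype ι] {m : ℕ}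
variable {w : ι → Fin m → F} {K : Submodule F (Fin m → F)} {S C G : Set ι}

/-- strong circuit elimination (via L1) -/
lemma elim_circuit {C1 C2 : Set ι} (h1 : circuitOn w K S C1) (h2 : circuitOn w K S C2)
    {x y : ι} (hx1 : x ∈ C1) (hx2 : x ∈ C2) (hy : y ∈ C1) (hy2 : y ∉ C2) :
    ∃ H, circuitOn w K S H ∧ y ∈ H ∧ H ⊆ (C1 ∪ C2) \ {x} := by
  obtain ⟨u1, hu1spt, hu1lc⟩ := h1.exists_vec
  obtain ⟨u2, hu2spt, hu2lc⟩ := h2.exists_vec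
  have hu1x : u1 x ≠ 0 := by rw [← hu1spt] at hx1; exact hx1
  have hu2x : u2 x ≠ 0 := by rw [← hu2spt] at hx2; exact hx2
  have hu1y : u1 y ≠ 0 := by rw [← hu1spt] at hy; exact hy
  have hu2y : u2 y = 0 := by
    by_contra hne
    exact hy2 (hu2spt ▸ (hne : y ∈ spt u2))
  set z : ι → F := (u2 x) • u1 - (u1 x) • u2 with hz
  have hzy : z y ≠ 0 := by
    simp only [hz, Pi.sub_apply, Pi.smul_apply, smul_eq_mul, hu2y, mul_zero, sub_zero]
    exact mul_ne_zero hu2x hu1y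
  have hzx : z x = 0 := by
    simp only [hz, Pi.sub_apply, Pi.smul_apply, smul_eq_mul]
    ring
  have hzspt : spt z ⊆ (C1 ∪ C2) \ {x} := by
    intro i hi
    rw [mem_spt] at hi
    constructor
    · by_contra hiu
      rw [Set.mem_union] at hiu
      push_neg at hiu
      have h1' : u1 i = 0 := by
        by_contra hne; exact hiu.1 (hu1spt ▸ (hne : i ∈ spt u1))
      have h2' : u2 i = 0 := by
        by_contra hne; exact hiu.2 (hu2spt ▸ (hne : i ∈ spt u2))
      exact hi (by simp [hz, h1', h2'])
    · intro hih
      rw [Set.mem_singleton_iff] at hih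
      subst hih
      exact hi hzx
  have hzS : spt z ⊆ S :=
    (hzspt.trans Set.diff_subset).trans
      (Set.union_subset h1.subset_ground h2.subset_ground)
  have hzlc : lc w z ∈ K := by
    rw [hz, lc_sub, lc_smul, lc_smul]
    exact Submodule.sub_mem _ (Submodule.smul_mem _ _ hu1lc) (Submodule.smul_mem _ _ hu2lc)
  obtain ⟨H, hH, hyH, hHspt⟩ := exists_circuit_of_vec' hzS hzlc hzy
  exact ⟨H, hH, hyH, hHspt.trans hzspt⟩

/-- THE main lemma: in a connected matroid a largest circuit `G` disjoint from a
largest circuit `C` cannot survive the contraction of `C`. -/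
lemma main_lemma {c : ℕ} (hconn : connOn w K S)
    (hmax : ∀ D, circuitOn w K S D → D.ncard ≤ c)
    (hC : circuitOn w K S C) (hCc : C.ncard = c)
    (hG : circuitOn w K S G) (hGc : G.ncard = c)
    (hdisj : Disjoint C G)
    (hsurv : ∀ T, T ⊂ G → ¬ depOn w (K ⊔ SpanW w C) S T) : False := by
  classical
  -- (1) the only circuits inside C ∪ G are C and G
  have honly : ∀ D, circuitOn w K S D → D ⊆ C ∪ G → D = C ∨ D = G := by
    intro D hD hsub
    by_cases hDC : (D \ C).Nonempty
    · right
      have hsubG : D \ C ⊆ G := fun x hx => (hsub hx.1).resolve_left hx.2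
      obtain ⟨t, ht⟩ := hDC
      obtain ⟨H, hH, htH, hHsub⟩ :=
        residue_circuit (X := C) hD ht.1 ht.2 (S₃ := S)
          (fun x hx => hD.subset_ground hx.1)
      have hHG : H ⊆ G := hHsub.trans hsubG
      have hHeq : H = G := by
        by_contra hne
        exact hsurv H (HasSubset.Subset.ssubset_of_ne hHG hne) hH.dep
      have hGD : G ⊆ D := by
        rw [← hHeq]
        exact hHsub.trans Set.diff_subset
      exact (hD.eq_of_dep hG.dep hGD).symm
    · left
      rw [Set.not_nonempty_iff_eq_empty, Set.diff_eq_empty] at hDC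
      exact (hC.eq_of_dep hD.dep hDC)
  -- (2) a connecting circuit exists
  obtain ⟨e₀, he₀⟩ := hC.nonempty
  obtain ⟨f₀, hf₀⟩ := hG.nonempty
  have hef : e₀ ≠ f₀ := fun h => Set.disjoint_left.1 hdisj he₀ (h ▸ hf₀)
  have hrel := hconn e₀ (hC.subset_ground he₀) f₀ (hG.subset_ground hf₀)
  have hConnNE : ∃ E, circuitOn w K S E ∧ (E ∩ C).Nonempty ∧ (E ∩ G).Nonempty := by
    rcases hrel with h | ⟨E, hE, heE, hfE⟩
    · exact absurd h hef
    · exact ⟨E, hE, ⟨e₀, heE, he₀⟩, ⟨f₀, hfE, hf₀⟩⟩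
  -- (3) minimal connecting circuit
  set NS : Set ℕ :=
    {k | ∃ E, (circuitOn w K S E ∧ (E ∩ C).Nonempty ∧ (E ∩ G).Nonempty) ∧
      (E \ (C ∪ G)).ncard = k} with hNS
  have hNSne : NS.Nonempty := by
    obtain ⟨E, hE⟩ := hConnNE
    exact ⟨(E \ (C ∪ G)).ncard, E, hE, rfl⟩
  obtain ⟨E, ⟨hE, hEC, hEG⟩, hEs⟩ := Nat.sInf_mem hNSne
  set s : ℕ := sInf NS with hs
  have hmin : ∀ E', circuitOn w K S E' → (E' ∩ C).Nonempty → (E' ∩ G).Nonempty →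
      s ≤ (E' \ (C ∪ G)).ncard := by
    intro E' h1 h2 h3
    exact Nat.sInf_le ⟨E', ⟨h1, h2, h3⟩, rfl⟩
  set R : Set ι := E \ (C ∪ G) with hR
  set P : Set ι := E ∩ C with hP
  set Q : Set ι := E ∩ G with hQ
  have hRne : R.Nonempty := by
    rw [Set.nonempty_iff_ne_empty]
    intro hempty
    have hEsub : E ⊆ C ∪ G := by
      rw [Set.diff_eq_empty] at hempty
      exact hempty
    rcases honly E hE hEsub with h | h
    · obtain ⟨t, ht⟩ := hEG
      exact Set.disjoint_left.1 hdisj (h ▸ ht.1) ht.2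
    · obtain ⟨t, ht⟩ := hEC
      exact Set.disjoint_left.1 hdisj ht.2 (h ▸ ht.1)
  have hsR : R.ncard = s := hEs
  have hs1 : 1 ≤ s := by
    have := hRne.ncard_pos (Set.toFinite _)
    omega
  -- (5) side-kill lemmas
  have sideG : ∀ B, circuitOn w K S B → B ⊆ G ∪ R → ¬ (B ∩ R).Nonempty := by
    intro B hB hBsub ⟨r, hrB, hrR⟩
    have hBC : Disjoint B C := by
      rw [Set.disjoint_left]
      intro t htB htC
      rcases hBsub htB with h | h
      · exact Set.disjoint_left.1 hdisj htC h
      · exact h.2 (Or.inl htC)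
    obtain ⟨p, hpE, hpC⟩ := hEC
    have hpB : p ∉ B := fun h => Set.disjoint_left.1 hBC h hpC
    have hrE : r ∈ E := hrR.1
    obtain ⟨H, hH, hpH, hHsub⟩ := elim_circuit hE hB hrE hrB hpE hpB
    by_cases hHG : (H ∩ G).Nonempty
    · -- connecting circuit with smaller residue
      have hne1 : (H ∩ C).Nonempty := ⟨p, hpH, hpC⟩
      have hle := hmin H hH hne1 hHG
      have hsub2 : H \ (C ∪ G) ⊆ R \ {r} := by
        intro t ht
        have htH := ht.1
        have h1 := hHsub htH
        refine ⟨?_, h1.2⟩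
        rcases h1.1 with h | h
        · exact ⟨h, ht.2⟩
        · rcases hBsub h with h' | h'
          · exact absurd (Or.inr h') ht.2
          · exact h'
      have : (H \ (C ∪ G)).ncard < s := by
        have h1 : (H \ (C ∪ G)).ncard ≤ (R \ {r}).ncard :=
          Set.ncard_le_ncard hsub2 (Set.toFinite _)
        have h2 : (R \ {r}).ncard < R.ncard := by
          refine Set.ncard_lt_ncard ⟨Set.diff_subset, fun hsub => ?_⟩ (Set.toFinite _)
          exact (hsub hrR).2 rfl
        omega
      omega
    · -- H ⊆ E \ {r}, contradiction
      have hHE : H ⊆ E := by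
        intro t htH
        have h1 := hHsub htH
        rcases h1.1 with h | h
        · exact h
        · rcases hBsub h with h' | h'
          · exact absurd (Set.mem_inter htH h') (by
              rw [Set.not_nonempty_iff_eq_empty] at hHG
              rw [hHG]; exact id)
          · exact h'.1
      have : H = E := hE.eq_of_dep hH.dep hHE
      exact (hHsub (this ▸ hrE)).2 rfl
  have sideC : ∀ B, circuitOn w K S B → B ⊆ C ∪ R → ¬ (B ∩ R).Nonempty := by
    intro B hB hBsub ⟨r, hrB, hrR⟩
    have hBG : Disjoint B G := by
      rw [Set.disjoint_left]
      intro t htB htG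
      rcases hBsub htB with h | h
      · exact Set.disjoint_left.1 hdisj h htG
      · exact h.2 (Or.inr htG)
    obtain ⟨q, hqE, hqG⟩ := hEG
    have hqB : q ∉ B := fun h => Set.disjoint_left.1 hBG h hqG
    have hrE : r ∈ E := hrR.1
    obtain ⟨H, hH, hqH, hHsub⟩ := elim_circuit hE hB hrE hrB hqE hqB
    by_cases hHC : (H ∩ C).Nonempty
    · have hne1 : (H ∩ G).Nonempty := ⟨q, hqH, hqG⟩
      have hle := hmin H hH hHC hne1
      have hsub2 : H \ (C ∪ G) ⊆ R \ {r} := by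
        intro t ht
        have h1 := hHsub ht.1
        refine ⟨?_, h1.2⟩
        rcases h1.1 with h | h
        · exact ⟨h, ht.2⟩
        · rcases hBsub h with h' | h'
          · exact absurd (Or.inl h') ht.2
          · exact h'
      have : (H \ (C ∪ G)).ncard < s := by
        have h1 : (H \ (C ∪ G)).ncard ≤ (R \ {r}).ncard :=
          Set.ncard_le_ncard hsub2 (Set.toFinite _)
        have h2 : (R \ {r}).ncard < R.ncard := by
          refine Set.ncard_lt_ncard ⟨Set.diff_subset, fun hsub => ?_⟩ (Set.toFinite _)
          exact (hsub hrR).2 rfl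
        omega
      omega
    · have hHE : H ⊆ E := by
        intro t htH
        have h1 := hHsub htH
        rcases h1.1 with h | h
        · exact h
        · rcases hBsub h with h' | h'
          · exact absurd (Set.mem_inter htH h') (by
              rw [Set.not_nonempty_iff_eq_empty] at hHC
              rw [hHC]; exact id)
          · exact h'.1
      have : H = E := hE.eq_of_dep hH.dep hHE
      exact (hHsub (this ▸ hrE)).2 rfl
  -- (6) the vector z₃ killing p and q
  obtain ⟨p, hpE, hpC⟩ := hEC
  obtain ⟨q, hqE, hqG⟩ := hEG
  obtain ⟨x, hxR⟩ := hRne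
  obtain ⟨uC, huCspt, huClc⟩ := hC.exists_vec
  obtain ⟨uG, huGspt, huGlc⟩ := hG.exists_vec
  obtain ⟨uE, huEspt, huElc⟩ := hE.exists_vec
  have huCp : uC p ≠ 0 := by rw [← huCspt] at hpC; exact hpC
  have huGq : uG q ≠ 0 := by rw [← huGspt] at hqG; exact hqG
  have huEx : uE x ≠ 0 := by
    have := hxR.1
    rw [← huEspt] at this; exact this
  have huGp : uG p = 0 := by
    by_contra hne
    exact Set.disjoint_left.1 hdisj hpC (huGspt ▸ (hne : p ∈ spt uG))
  have huCq : uC q = 0 := by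
    by_contra hne
    exact Set.disjoint_left.1 hdisj (huCspt ▸ (hne : q ∈ spt uC)) hqG
  have huCx : uC x = 0 := by
    by_contra hne
    exact hxR.2 (Or.inl (huCspt ▸ (hne : x ∈ spt uC)))
  have huGx : uG x = 0 := by
    by_contra hne
    exact hxR.2 (Or.inr (huGspt ▸ (hne : x ∈ spt uG)))
  set z₃ : ι → F :=
    (uC p * uG q) • uE - (uE p * uG q) • uC - (uE q * uC p) • uG with hz₃
  have hz₃p : z₃ p = 0 := by
    simp only [hz₃, Pi.sub_apply, Pi.smul_apply, smul_eq_mul, huGp]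
    ring
  have hz₃q : z₃ q = 0 := by
    simp only [hz₃, Pi.sub_apply, Pi.smul_apply, smul_eq_mul, huCq]
    ring
  have hz₃x : z₃ x ≠ 0 := by
    simp only [hz₃, Pi.sub_apply, Pi.smul_apply, smul_eq_mul, huCx, huGx, mul_zero, sub_zero]
    exact mul_ne_zero (mul_ne_zero huCp huGq) huEx
  have hz₃spt : spt z₃ ⊆ (C ∪ G ∪ E) \ ({p} ∪ {q}) := by
    intro i hi
    rw [mem_spt] at hi
    constructor
    · by_contra hiu
      simp only [Set.mem_union, not_or] at hiu
      have h1' : uC i = 0 := by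
        by_contra hne; exact hiu.1.1 (huCspt ▸ (hne : i ∈ spt uC))
      have h2' : uG i = 0 := by
        by_contra hne; exact hiu.1.2 (huGspt ▸ (hne : i ∈ spt uG))
      have h3' : uE i = 0 := by
        by_contra hne; exact hiu.2 (huEspt ▸ (hne : i ∈ spt uE))
      exact hi (by simp [hz₃, h1', h2', h3'])
    · intro hiu
      rcases hiu with h | h
      · rw [Set.mem_singleton_iff] at h; subst h; exact hi hz₃p
      · rw [Set.mem_singleton_iff] at h; subst h; exact hi hz₃q
  have hz₃S : spt z₃ ⊆ S := by
    refine (hz₃spt.trans Set.diff_subset).trans ?_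
    refine Set.union_subset (Set.union_subset hC.subset_ground hG.subset_ground)
      hE.subset_ground
  have hz₃lc : lc w z₃ ∈ K := by
    rw [hz₃, lc_sub, lc_sub, lc_smul, lc_smul, lc_smul]
    refine Submodule.sub_mem _ (Submodule.sub_mem _ ?_ ?_) ?_
    · exact Submodule.smul_mem _ _ huElc
    · exact Submodule.smul_mem _ _ huClc
    · exact Submodule.smul_mem _ _ huGlc
  obtain ⟨D₃, hD₃, hxD₃, hD₃spt⟩ := exists_circuit_of_vec' hz₃S hz₃lc hz₃x
  have hD₃sub : D₃ ⊆ (C ∪ G ∪ E) \ ({p} ∪ {q}) := hD₃spt.trans hz₃spt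
  have hpD₃ : p ∉ D₃ := fun h => (hD₃sub h).2 (Or.inl rfl)
  have hqD₃ : q ∉ D₃ := fun h => (hD₃sub h).2 (Or.inr rfl)
  have hD₃res : D₃ \ (C ∪ G) ⊆ R := by
    intro t ht
    rcases (hD₃sub ht.1).1 with h | h
    · exact absurd h ht.2
    · exact ⟨h, ht.2⟩
  -- (8) D₃ is connecting
  have hD₃C : (D₃ ∩ C).Nonempty := by
    rw [Set.nonempty_iff_ne_empty]
    intro hemp
    have hsub : D₃ ⊆ G ∪ R := by
      intro t htD
      by_cases htC : t ∈ C
      · exact absurd (Set.mem_inter htD htC) (by rw [hemp]; exact id)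
      by_cases htG : t ∈ G
      · exact Or.inl htG
      · exact Or.inr (hD₃res ⟨htD, by simp [htC, htG]⟩)
    have hne1 : (D₃ ∩ R).Nonempty := ⟨x, hxD₃, hxR⟩
    exact sideG D₃ hD₃ hsub hne1
  have hD₃G : (D₃ ∩ G).Nonempty := by
    rw [Set.nonempty_iff_ne_empty]
    intro hemp
    have hsub : D₃ ⊆ C ∪ R := by
      intro t htD
      by_cases htG : t ∈ G
      · exact absurd (Set.mem_inter htD htG) (by rw [hemp]; exact id)
      by_cases htC : t ∈ C
      · exact Or.inl htC
      · exact Or.inr (hD₃res ⟨htD, by simp [htC, htG]⟩)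
    have hne1 : (D₃ ∩ R).Nonempty := ⟨x, hxD₃, hxR⟩
    exact sideC D₃ hD₃ hsub hne1
  -- D₃ contains all of R
  have hRD₃ : R ⊆ D₃ := by
    have hle := hmin D₃ hD₃ hD₃C hD₃G
    have heq : D₃ \ (C ∪ G) = R := by
      refine Set.eq_of_subset_of_ncard_le hD₃res ?_ (Set.toFinite _)
      omega
    intro t htR
    have : t ∈ D₃ \ (C ∪ G) := heq ▸ htR
    exact this.1
  -- (9) C \ P ⊆ D₃ via elimination keeping p
  have hCP : C \ P ⊆ D₃ := by
    obtain ⟨H, hH, hpH, hHsub⟩ :=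
      elim_circuit hE hD₃ (hxR.1) hxD₃ hpE hpD₃
    have hHres : H \ (C ∪ G) ⊆ R \ {x} := by
      intro t ht
      have h1 := hHsub ht.1
      refine ⟨?_, h1.2⟩
      rcases h1.1 with h | h
      · exact ⟨h, ht.2⟩
      · exact hD₃res ⟨h, ht.2⟩
    have hHG : ¬ (H ∩ G).Nonempty := by
      intro hne
      have hne1 : (H ∩ C).Nonempty := ⟨p, hpH, hpC⟩
      have hle := hmin H hH hne1 hne
      have h1 : (H \ (C ∪ G)).ncard ≤ (R \ {x}).ncard :=
        Set.ncard_le_ncard hHres (Set.toFinite _)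
      have h2 : (R \ {x}).ncard < R.ncard := by
        refine Set.ncard_lt_ncard ⟨Set.diff_subset, fun hsub => ?_⟩ (Set.toFinite _)
        exact (hsub hxR).2 rfl
      omega
    have hHR : ¬ (H ∩ R).Nonempty := by
      intro hne
      refine sideC H hH ?_ hne
      intro t htH
      by_cases htC : t ∈ C
      · exact Or.inl htC
      by_cases htG : t ∈ G
      · exact absurd (Set.mem_inter htH htG) (by
          rw [Set.not_nonempty_iff_eq_empty] at hHG
          rw [hHG]; exact id)
      · refine Or.inr ?_
        have h1 := hHsub htH
        rcases h1.1 with h | h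
        · exact ⟨h, by simp [htC, htG]⟩
        · exact hD₃res ⟨h, by simp [htC, htG]⟩
    have hHC : H ⊆ C := by
      intro t htH
      by_cases htC : t ∈ C
      · exact htC
      exfalso
      by_cases htG : t ∈ G
      · exact hHG ⟨t, htH, htG⟩
      · refine hHR ⟨t, htH, ?_⟩
        have h1 := hHsub htH
        rcases h1.1 with h | h
        · exact ⟨h, by simp [htC, htG]⟩
        · exact hD₃res ⟨h, by simp [htC, htG]⟩
    have hHeq : H = C := hC.eq_of_dep hH.dep hHC
    intro t ht
    have htH : t ∈ H := hHeq ▸ ht.1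
    have h1 := hHsub htH
    rcases h1.1 with h | h
    · exact absurd (Set.mem_inter h ht.1) ht.2
    · exact h
  -- (10) G \ Q ⊆ D₃ via elimination keeping q
  have hGQ : G \ Q ⊆ D₃ := by
    obtain ⟨H, hH, hqH, hHsub⟩ :=
      elim_circuit hE hD₃ (hxR.1) hxD₃ hqE hqD₃
    have hHres : H \ (C ∪ G) ⊆ R \ {x} := by
      intro t ht
      have h1 := hHsub ht.1
      refine ⟨?_, h1.2⟩
      rcases h1.1 with h | h
      · exact ⟨h, ht.2⟩
      · exact hD₃res ⟨h, ht.2⟩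
    have hHC : ¬ (H ∩ C).Nonempty := by
      intro hne
      have hne1 : (H ∩ G).Nonempty := ⟨q, hqH, hqG⟩
      have hle := hmin H hH hne hne1
      have h1 : (H \ (C ∪ G)).ncard ≤ (R \ {x}).ncard :=
        Set.ncard_le_ncard hHres (Set.toFinite _)
      have h2 : (R \ {x}).ncard < R.ncard := by
        refine Set.ncard_lt_ncard ⟨Set.diff_subset, fun hsub => ?_⟩ (Set.toFinite _)
        exact (hsub hxR).2 rfl
      omega
    have hHR : ¬ (H ∩ R).Nonempty := by
      intro hne
      refine sideG H hH ?_ hne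
      intro t htH
      by_cases htG : t ∈ G
      · exact Or.inl htG
      by_cases htC : t ∈ C
      · exact absurd (Set.mem_inter htH htC) (by
          rw [Set.not_nonempty_iff_eq_empty] at hHC
          rw [hHC]; exact id)
      · refine Or.inr ?_
        have h1 := hHsub htH
        rcases h1.1 with h | h
        · exact ⟨h, by simp [htC, htG]⟩
        · exact hD₃res ⟨h, by simp [htC, htG]⟩
    have hHGsub : H ⊆ G := by
      intro t htH
      by_cases htG : t ∈ G
      · exact htG
      exfalso
      by_cases htC : t ∈ C
      · exact hHC ⟨t, htH, htC⟩
      · refine hHR ⟨t, htH, ?_⟩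
        have h1 := hHsub htH
        rcases h1.1 with h | h
        · exact ⟨h, by simp [htC, htG]⟩
        · exact hD₃res ⟨h, by simp [htC, htG]⟩
    have hHeq : H = G := hG.eq_of_dep hH.dep hHGsub
    intro t ht
    have htH : t ∈ H := hHeq ▸ ht.1
    have h1 := hHsub htH
    rcases h1.1 with h | h
    · exact absurd (Set.mem_inter h ht.1) ht.2
    · exact h
  -- (11) counting
  have hPC : P ⊆ C := fun t ht => ht.2
  have hQG : Q ⊆ G := fun t ht => ht.2
  have hcardC : (C \ P).ncard + P.ncard = c := by
    rw [Set.ncard_diff_add_ncard_of_subset hPC (Set.toFinite _), hCc]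
  have hcardG : (G \ Q).ncard + Q.ncard = c := by
    rw [Set.ncard_diff_add_ncard_of_subset hQG (Set.toFinite _), hGc]
  have hEdecomp : E.ncard = P.ncard + Q.ncard + R.ncard := by
    have h1 : E = (P ∪ Q) ∪ R := by
      ext t
      constructor
      · intro ht
        by_cases htC : t ∈ C
        · exact Or.inl (Or.inl ⟨ht, htC⟩)
        by_cases htG : t ∈ G
        · exact Or.inl (Or.inr ⟨ht, htG⟩)
        · exact Or.inr ⟨ht, by simp [htC, htG]⟩
      · intro ht
        rcases ht with (h | h) | h
        · exact h.1
        · exact h.1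
        · exact h.1
    have hdPQ : Disjoint P Q := by
      rw [Set.disjoint_left]
      intro t ht ht'
      exact Set.disjoint_left.1 hdisj ht.2 ht'.2
    have hdPQR : Disjoint (P ∪ Q) R := by
      rw [Set.disjoint_left]
      intro t ht ht'
      rcases ht with h | h
      · exact ht'.2 (Or.inl h.2)
      · exact ht'.2 (Or.inr h.2)
    rw [h1, Set.ncard_union_eq hdPQR (Set.toFinite _) (Set.toFinite _),
      Set.ncard_union_eq hdPQ (Set.toFinite _) (Set.toFinite _)]
  have hEc : E.ncard ≤ c := hmax E hE
  have hD₃c : D₃.ncard ≤ c := hmax D₃ hD₃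
  have hD₃big : (C \ P).ncard + (G \ Q).ncard + R.ncard ≤ D₃.ncard := by
    have hsub : ((C \ P) ∪ (G \ Q)) ∪ R ⊆ D₃ := by
      refine Set.union_subset (Set.union_subset hCP hGQ) hRD₃
    have hd1 : Disjoint (C \ P) (G \ Q) := by
      rw [Set.disjoint_left]
      intro t ht ht'
      exact Set.disjoint_left.1 hdisj ht.1 ht'.1
    have hd2 : Disjoint ((C \ P) ∪ (G \ Q)) R := by
      rw [Set.disjoint_left]
      intro t ht ht'
      rcases ht with h | h
      · exact ht'.2 (Or.inl h.1)
      · exact ht'.2 (Or.inr h.1)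
    calc (C \ P).ncard + (G \ Q).ncard + R.ncard
        = (((C \ P) ∪ (G \ Q)) ∪ R).ncard := by
          rw [Set.ncard_union_eq hd2 (Set.toFinite _) (Set.toFinite _),
            Set.ncard_union_eq hd1 (Set.toFinite _) (Set.toFinite _)]
      _ ≤ D₃.ncard := Set.ncard_le_ncard hsub (Set.toFinite _)
  have hpP : p ∈ P := ⟨hpE, hpC⟩
  have hqQ : q ∈ Q := ⟨hqE, hqG⟩
  have hPne : 1 ≤ P.ncard := (Set.nonempty_of_mem hpP).ncard_pos (Set.toFinite _)
  have hQne : 1 ≤ Q.ncard := (Set.nonempty_of_mem hqQ).ncard_pos (Set.toFinite _)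
  omega

end Tools4

section Tools5
variable {F : Type*} [Field F] {ι : Type*} [Fintype ι] {m : ℕ}
variable {w : ι → Fin m → F} {K : Submodule F (Fin m → F)} {S C : Set ι} {e f : ι}

lemma CsdLE_mono {d d' : ℕ} (h : CsdLE w S K d) (hd : d ≤ d') : CsdLE w S K d' := by
  induction h generalizing d' with
  | rank0 S K d hK => exact .rank0 S K d' hK
  | comp S K d hnc _ ih => exact .comp S K d' hnc fun e he => ih e he hd
  | contr S K d v hconn _ ih =>
      have hd' : d' = (d' - 1) + 1 := by omega
      rw [hd']
      exact .contr S K (d' - 1) v hconn (ih (by omega))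

lemma CdLEr_mono {d d' : ℕ} (h : CdLEr w S K d) (hd : d ≤ d') : CdLEr w S K d' := by
  induction h generalizing d' with
  | empty S K d hS => exact .empty S K d' hS
  | single S K d e hS =>
      have hd' : d' = (d' - 1) + 1 := by omega
      rw [hd']
      exact .single S K (d' - 1) e hS
  | comp S K d hnc _ ih => exact .comp S K d' hnc fun e he => ih e he hd
  | contr S K d e hconn heS _ ih =>
      have hd' : d' = (d' - 1) + 1 := by omega
      rw [hd']
      exact .contr S K (d' - 1) e hconn heS (ih (by omega))

lemma loop_circuit (he : w e ∈ K) (heS : e ∈ S) : circuitOn w K S {e} := by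
  classical
  constructor
  · refine depOn_of_spt (by simpa using heS) (c := fun i => if i = e then 1 else 0) ?_ ?_ ?_
    · intro i hi
      rw [mem_spt] at hi
      by_contra hie
      exact hi (if_neg hie)
    · intro h0
      have := congrFun h0 e
      simp at this
    · have : lc w (fun i => if i = e then (1 : F) else 0) = w e := by
        unfold lc
        rw [Finset.sum_eq_single e] <;> simp +contextual
      rw [this]
      exact he
  · intro D hD hdep
    rw [Set.ssubset_singleton_iff] at hD
    subst hD
    exact absurd hdep.nonempty (by simp)

lemma circuit_loop_eq (hC : circuitOn w K S C) (he : w e ∈ K) (heC : e ∈ C) :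
    C = {e} :=
  (hC.eq_of_dep (loop_circuit he (hC.subset_ground heC)).dep (by simpa using heC)).symm

lemma rel_loop_eq (he : w e ∈ K) (h : relOn w K S e f) : f = e := by
  rcases h with h | ⟨C, hC, heC, hfC⟩
  · exact h.symm
  · have := circuit_loop_eq hC he heC
    rw [this] at hfC
    exact hfC

lemma rel_insert_loop (he : w e ∈ K) (heS : e ∉ S) {x f : ι} (hx : x ∈ S)
    (h : relOn w K (insert e S) x f) : relOn w K S x f := by
  rcases h with h | ⟨C, hC, hxC, hfC⟩
  · exact Or.inl h
  · have heC : e ∉ C := by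
      intro heC
      have hCe := circuit_loop_eq hC he heC
      rw [hCe] at hxC
      rw [Set.mem_singleton_iff] at hxC
      exact heS (hxC ▸ hx)
    have hCS : C ⊆ S := by
      intro t htC
      rcases hC.subset_ground htC with h' | h'
      · exact absurd (h' ▸ htC) heC
      · exact h'
    exact Or.inr ⟨C, circuitOn_ambient hCS hC, hxC, hfC⟩

lemma cls_insert_loop (he : w e ∈ K) (heS : e ∉ S) {x : ι} (hx : x ∈ S) :
    {f ∈ insert e S | relOn w K (insert e S) x f} = {f ∈ S | relOn w K S x f} := by
  ext f
  constructor
  · rintro ⟨hf, hrel⟩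
    rcases hf with rfl | hf
    · exfalso
      have := rel_loop_eq he (relOn_symm hrel)
      exact heS (this ▸ hx)
    · exact ⟨hf, rel_insert_loop he heS hx hrel⟩
  · rintro ⟨hf, hrel⟩
    exact ⟨Or.inr hf, relOn_mono_ambient (Set.subset_insert e S) hrel⟩

lemma cls_insert_loop_self (he : w e ∈ K) (heS : e ∉ S) :
    {f ∈ insert e S | relOn w K (insert e S) e f} = {e} := by
  ext f
  constructor
  · rintro ⟨hf, hrel⟩
    exact rel_loop_eq he hrel
  · rintro rfl
    exact ⟨Or.inl rfl, relOn_refl _⟩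

/-- adding a loop does not increase the contraction*-depth -/
lemma CsdLE_addLoop {d : ℕ} (h : CsdLE w S K d) :
    ∀ e, w e ∈ K → CsdLE w (insert e S) K d := by
  induction h with
  | rank0 S K d hK =>
      intro e he
      refine .rank0 _ K d fun i hi => ?_
      rcases hi with rfl | hi
      · exact he
      · exact hK i hi
  | comp S K d hnc hcomp ih =>
      intro e he
      by_cases heS : e ∈ S
      · rw [Set.insert_eq_self.2 heS]
        exact .comp S K d hnc hcomp
      · have hnc' : ¬ connOn w K (insert e S) := by
          intro hcon
          unfold connOn at hnc
          push_neg at hnc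
          obtain ⟨a, ha, b, hb, hab⟩ := hnc
          exact hab (rel_insert_loop he heS ha
            (hcon a (Or.inr ha) b (Or.inr hb)))
        refine .comp _ K d hnc' fun x hx => ?_
        rcases hx with rfl | hx
        · rw [cls_insert_loop_self he heS]
          exact .rank0 _ K d (by rintro i rfl; exact he)
        · rw [cls_insert_loop he heS hx]
          exact hcomp x hx
  | contr S K d v hconn hsub ih =>
      intro e he
      by_cases heS : e ∈ S
      · rw [Set.insert_eq_self.2 heS]
        exact .contr S K d v hconn hsub
      · by_cases hSe : S = ∅
        · subst hSe
          refine .rank0 _ K (d + 1) fun i hi => ?_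
          simp at hi
          subst hi
          exact he
        · obtain ⟨f, hf⟩ := Set.nonempty_iff_ne_empty.2 hSe
          have hnc' : ¬ connOn w K (insert e S) := by
            intro hcon
            have := hcon e (Or.inl rfl) f (Or.inr hf)
            have hfe := rel_loop_eq he this
            exact heS (hfe ▸ hf)
          refine .comp _ K (d + 1) hnc' fun x hx => ?_
          rcases hx with rfl | hx
          · rw [cls_insert_loop_self he heS]
            exact .rank0 _ K (d + 1) (by rintro i rfl; exact he)
          · rw [cls_insert_loop he heS hx]
            have hclsS : {f ∈ S | relOn w K S x f} = S := by
              ext y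
              refine ⟨fun hy => hy.1, fun hy => ⟨hy, hconn x hx y hy⟩⟩
            rw [hclsS]
            exact .contr S K d v hconn hsub

/-- contraction-depth bounds contraction*-depth -/
lemma cd_to_csd {d : ℕ} (h : CdLEr w S K d) : CsdLE w S K d := by
  induction h with
  | empty S K d hS =>
      exact .rank0 S K d (by rw [hS]; simp)
  | single S K d e hS =>
      have hconn : connOn w K S := by
        rw [hS]
        rintro a ha b hb
        rw [Set.mem_singleton_iff] at ha hb
        rw [ha, hb]
        exact relOn_refl _
      refine .contr S K d (w e) hconn ?_
      refine .rank0 S _ d fun i hi => ?_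
      rw [hS, Set.mem_singleton_iff] at hi
      subst hi
      exact Submodule.mem_sup_right (Submodule.mem_span_singleton.2 ⟨1, by simp⟩)
  | comp S K d hnc hcomp ih =>
      exact .comp S K d hnc ih
  | contr S K d e hconn heS hsub ih =>
      have h1 : CsdLE w (insert e (S \ {e})) (K ⊔ Submodule.span F {w e}) d :=
        CsdLE_addLoop ih e
          (Submodule.mem_sup_right (Submodule.mem_span_singleton.2 ⟨1, by simp⟩))
      have h2 : insert e (S \ {e}) = S := by
        rw [Set.insert_diff_singleton, Set.insert_eq_self.2 heS]
      rw [h2] at h1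
      exact .contr S K d (w e) hconn h1

/-- existence of a contraction*-depth bound -/
lemma csd_exists_aux :
    ∀ (r : ℕ), ∀ (k : ℕ) (S : Set ι) (K : Submodule F (Fin m → F)), S.ncard ≤ k →
      Module.finrank F (K ⊔ SpanW w S : Submodule F (Fin m → F)) ≤ Module.finrank F K + r →
      CsdLE w S K r := by
  intro r
  induction r with
  | zero =>
      intro k S K _ hrk
      refine .rank0 S K 0 fun i hi => ?_
      have heq : K = K ⊔ SpanW w S := by
        refine Submodule.eq_of_le_of_finrank_le le_sup_left (by omega)
      have : w i ∈ SpanW w S := Submodule.subset_span ⟨i, hi, rfl⟩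
      rw [heq]
      exact Submodule.mem_sup_right this
  | succ r ihr =>
      intro k
      induction k with
      | zero =>
          intro S K hk _
          have : S = ∅ := by
            rw [← Set.ncard_eq_zero (Set.toFinite S)]
            omega
          exact .rank0 S K _ (by rw [this]; simp)
      | succ k ihk =>
          intro S K hk hrk
          by_cases hK : ∀ i ∈ S, w i ∈ K
          · exact .rank0 S K _ hK
          · push_neg at hK
            obtain ⟨i₀, hi₀S, hi₀K⟩ := hK
            have hwspan : w i₀ ∈ SpanW w S := Submodule.subset_span ⟨i₀, hi₀S, rfl⟩
            by_cases hconn : connOn w K S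
            · -- contract w i₀
              set K' := K ⊔ Submodule.span F {w i₀} with hK'
              have hKlt : K < K' := by
                refine lt_of_le_of_ne le_sup_left fun h => ?_
                have : w i₀ ∈ K' := Submodule.mem_sup_right
                  (Submodule.mem_span_singleton.2 ⟨1, by simp⟩)
                rw [← h] at this
                exact hi₀K this
              have hfr : Module.finrank F K < Module.finrank F K' :=
                Submodule.finrank_lt_finrank_of_lt hKlt
              have hsupeq : K' ⊔ SpanW w S = K ⊔ SpanW w S := by
                rw [hK', sup_assoc]
                congr 1
                refine le_antisymm (sup_le ?_ le_rfl) le_sup_right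
                exact (Submodule.span_le.2 (by simpa using hwspan))
              refine .contr S K r (w i₀) hconn ?_
              refine ihr (k + 1) S K' hk ?_
              rw [hsupeq]
              omega
            · refine .comp S K _ hconn fun e he => ?_
              have hcls := cls_ssubset hconn he
              have hcard : {f ∈ S | relOn w K S e f}.ncard ≤ k := by
                have := Set.ncard_lt_ncard hcls (Set.toFinite _)
                omega
              refine ihk _ _ hcard ?_
              have hle : (K ⊔ SpanW w {f ∈ S | relOn w K S e f} : Submodule F (Fin m → F))
                  ≤ K ⊔ SpanW w S := by
                refine sup_le_sup_left ?_ K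
                exact Submodule.span_mono (Set.image_mono fun x hx => hx.1)
              calc Module.finrank F (K ⊔ SpanW w {f ∈ S | relOn w K S e f} :
                      Submodule F (Fin m → F))
                  ≤ Module.finrank F (K ⊔ SpanW w S : Submodule F (Fin m → F)) :=
                    Submodule.finrank_mono hle
                _ ≤ Module.finrank F K + (r + 1) := hrk

lemma csd_nonempty (S : Set ι) (K : Submodule F (Fin m → F)) : ∃ d, CsdLE w S K d := by
  refine ⟨Module.finrank F (K ⊔ SpanW w S : Submodule F (Fin m → F)),
    csd_exists_aux _ S.ncard S K le_rfl ?_⟩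
  omega

lemma cd_exists_aux : ∀ (k : ℕ) (S : Set ι) (K : Submodule F (Fin m → F)),
    S.ncard ≤ k → CdLEr w S K k := by
  intro k
  induction k with
  | zero =>
      intro S K hk
      refine .empty S K 0 ?_
      rw [← Set.ncard_eq_zero (Set.toFinite S)]
      omega
  | succ k ih =>
      intro S K hk
      by_cases hS : S = ∅
      · exact .empty S K _ hS
      obtain ⟨e, he⟩ := Set.nonempty_iff_ne_empty.2 hS
      by_cases hconn : connOn w K S
      · refine .contr S K k e hconn he (ih _ _ ?_)
        have h1 := Set.ncard_diff_add_ncard_of_subset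
          (Set.singleton_subset_iff.2 he) (Set.toFinite S)
        rw [Set.ncard_singleton] at h1
        omega
      · refine .comp S K _ hconn fun x hx => ?_
        have hcls := cls_ssubset hconn hx
        have hcard : {f ∈ S | relOn w K S x f}.ncard ≤ k := by
          have := Set.ncard_lt_ncard hcls (Set.toFinite _)
          omega
        exact CdLEr_mono (ih _ _ hcard) (by omega)

lemma cd_nonempty (S : Set ι) (K : Submodule F (Fin m → F)) : ∃ d, CdLEr w S K d :=
  ⟨S.ncard, cd_exists_aux _ S K le_rfl⟩

end Tools5

section Tools6
variable {F : Type*} [Field F] {ι : Type*} [Fintype ι] {m : ℕ}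
variable {w : ι → Fin m → F} {K : Submodule F (Fin m → F)} {S : Set ι}

lemma circuit_bound {d : ℕ} (h : CsdLE w S K d) :
    ∀ C, circuitOn w K S C → C.ncard ≤ 2 ^ d := by
  induction h with
  | rank0 S K d hK =>
      intro C hC
      obtain ⟨e, he⟩ := hC.nonempty
      have hCe := circuit_loop_eq hC (hK e (hC.subset_ground he)) he
      rw [hCe, Set.ncard_singleton]
      exact Nat.one_le_two_pow
  | comp S K d hnc hcomp ih =>
      intro C hC
      obtain ⟨e, he⟩ := hC.nonempty
      have hsub := circuit_subset_cls hC he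
      exact ih e (hC.subset_ground he) C (circuitOn_ambient hsub hC)
  | contr S K d v hconn hsub ih =>
      intro C hC
      obtain ⟨u0, hu0spt, hu0lc⟩ := hC.exists_vec
      obtain ⟨x₀, hx₀⟩ := hC.nonempty
      have hx₀u : u0 x₀ ≠ 0 := by rw [← hu0spt] at hx₀; exact hx₀
      have hu0lc' : lc w u0 ∈ K ⊔ Submodule.span F {v} := Submodule.mem_sup_left hu0lc
      have hsptS : spt u0 ⊆ S := by rw [hu0spt]; exact hC.subset_ground
      obtain ⟨C1, hC1, hx₀C1, hC1sub⟩ := exists_circuit_of_vec' hsptS hu0lc' hx₀u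
      rw [hu0spt] at hC1sub
      have h2d : (2:ℕ) ^ d ≤ 2 ^ (d + 1) := Nat.pow_le_pow_right (by norm_num) (by omega)
      by_cases hCC1 : C ⊆ C1
      · have heq : C = C1 := subset_antisymm hCC1 hC1sub
        rw [heq]
        exact le_trans (ih C1 hC1) h2d
      · have hex : ∃ x, x ∈ C ∧ x ∉ C1 := by
          by_contra hno
          push_neg at hno
          exact hCC1 hno
        obtain ⟨x, hxC, hxC1⟩ := hex
        have hxu : u0 x ≠ 0 := by rw [← hu0spt] at hxC; exact hxC
        obtain ⟨C2, hC2, hxC2, hC2sub⟩ := exists_circuit_of_vec' hsptS hu0lc' hxu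
        rw [hu0spt] at hC2sub
        by_cases hCC2 : C ⊆ C2
        · have heq : C = C2 := subset_antisymm hCC2 hC2sub
          rw [heq]
          exact le_trans (ih C2 hC2) h2d
        · obtain ⟨u1, hu1spt, hu1lc⟩ := hC1.exists_vec
          obtain ⟨u2, hu2spt, hu2lc⟩ := hC2.exists_vec
          obtain ⟨t1, ht1⟩ := mem_sup_span_singleton_iff.1 hu1lc
          obtain ⟨t2, ht2⟩ := mem_sup_span_singleton_iff.1 hu2lc
          have ht1ne : t1 ≠ 0 := by
            rintro rfl
            have hdep : depOn w K S C1 :=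
              depOn_of_spt (hC1sub.trans hC.subset_ground) (c := u1)
                (by rw [hu1spt]) (by
                  intro h0
                  obtain ⟨y, hy⟩ := hC1.nonempty
                  rw [← hu1spt, mem_spt] at hy
                  rw [h0] at hy
                  simp at hy)
                (by simpa using ht1)
            have := hC.eq_of_dep hdep hC1sub
            exact hCC1 (this ▸ subset_rfl)
          have ht2ne : t2 ≠ 0 := by
            rintro rfl
            have hdep : depOn w K S C2 :=
              depOn_of_spt (hC2sub.trans hC.subset_ground) (c := u2)
                (by rw [hu2spt]) (by
                  intro h0
                  obtain ⟨y, hy⟩ := hC2.nonempty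
                  rw [← hu2spt, mem_spt] at hy
                  rw [h0] at hy
                  simp at hy)
                (by simpa using ht2)
            have := hC.eq_of_dep hdep hC2sub
            exact hCC2 (this ▸ subset_rfl)
          set z : ι → F := t2 • u1 - t1 • u2 with hz
          have hzx : z x ≠ 0 := by
            have hu1x : u1 x = 0 := by
              by_contra hne
              exact hxC1 (hu1spt ▸ (hne : x ∈ spt u1))
            have hu2x : u2 x ≠ 0 := by rw [← hu2spt] at hxC2; exact hxC2
            simp only [hz, Pi.sub_apply, Pi.smul_apply, smul_eq_mul, hu1x, mul_zero, zero_sub,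
              neg_ne_zero]
            exact mul_ne_zero ht1ne hu2x
          have hzlc : lc w z ∈ K := by
            have hzeq : lc w z = t2 • (lc w u1 - t1 • v) - t1 • (lc w u2 - t2 • v) := by
              rw [hz, lc_sub, lc_smul, lc_smul, smul_sub, smul_sub, smul_smul, smul_smul,
                mul_comm t2 t1]
              abel
            rw [hzeq]
            exact Submodule.sub_mem _ (Submodule.smul_mem _ _ ht1) (Submodule.smul_mem _ _ ht2)
          have hzspt : spt z ⊆ C1 ∪ C2 := by
            intro i hi
            rw [mem_spt] at hi
            by_contra hiu
            rw [Set.mem_union] at hiu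
            push_neg at hiu
            have h1' : u1 i = 0 := by
              by_contra hne; exact hiu.1 (hu1spt ▸ (hne : i ∈ spt u1))
            have h2' : u2 i = 0 := by
              by_contra hne; exact hiu.2 (hu2spt ▸ (hne : i ∈ spt u2))
            exact hi (by simp [hz, h1', h2'])
          have hzsptC : spt z ⊆ C := hzspt.trans (Set.union_subset hC1sub hC2sub)
          have hdepz : depOn w K S (spt z) :=
            depOn_of_spt (hzsptC.trans hC.subset_ground) subset_rfl (ne_zero_of_spt hzx) hzlc
          have hCeq : spt z = C := hC.eq_of_dep hdepz hzsptC
          have hsub2 : C ⊆ C1 ∪ C2 := by rw [← hCeq]; exact hzspt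
          calc C.ncard ≤ (C1 ∪ C2).ncard := Set.ncard_le_ncard hsub2 (Set.toFinite _)
            _ ≤ C1.ncard + C2.ncard := Set.ncard_union_le _ _
            _ ≤ 2 ^ d + 2 ^ d := Nat.add_le_add (ih C1 hC1) (ih C2 hC2)
            _ = 2 ^ (d + 1) := by ring

end Tools6

section Tools7a
variable {F : Type*} [Field F] {ι : Type*} [Fintype ι] {m : ℕ}
variable {w : ι → Fin m → F} {K : Submodule F (Fin m → F)} {S C : Set ι}

/-- after contracting a largest circuit, all circuits have size ≤ c - 1 -/
lemma contract_circuit_bound {c : ℕ} (hconn : connOn w K S)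
    (hmax : ∀ D, circuitOn w K S D → D.ncard ≤ c)
    (hC : circuitOn w K S C) (hCc : C.ncard = c) :
    ∀ G, circuitOn w (K ⊔ SpanW w C) (S \ C) G → G.ncard ≤ c - 1 := by
  intro G hG
  have hGS : G ⊆ S \ C := hG.subset_ground
  obtain ⟨u, huspt, hulc⟩ := hG.exists_vec
  obtain ⟨a, haspt, halc⟩ := mem_sup_SpanW_iff.1 hulc
  obtain ⟨t, htG⟩ := hG.nonempty
  set cc : ι → F := u - a with hcc
  have hcclc : lc w cc ∈ K := by rw [hcc, lc_sub]; exact halc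
  have hat : a t = 0 := by
    by_contra hne
    exact (hGS htG).2 (haspt hne)
  have hcct : cc t ≠ 0 := by
    have hut : u t ≠ 0 := by rw [← huspt] at htG; exact htG
    simpa [hcc, hat] using hut
  have hccspt : spt cc ⊆ G ∪ C := by
    intro i hi
    rw [mem_spt] at hi
    by_contra hiu
    rw [Set.mem_union] at hiu
    push_neg at hiu
    have h1 : u i = 0 := by
      by_contra hne; exact hiu.1 (huspt ▸ (hne : i ∈ spt u))
    have h2 : a i = 0 := by
      by_contra hne; exact hiu.2 (haspt hne)
    exact hi (by simp [hcc, h1, h2])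
  have hccS : spt cc ⊆ S :=
    hccspt.trans (Set.union_subset (hGS.trans Set.diff_subset) hC.subset_ground)
  obtain ⟨D, hD, htD, hDspt⟩ := exists_circuit_of_vec' hccS hcclc hcct
  have hDsub : D ⊆ G ∪ C := hDspt.trans hccspt
  -- the residue of D is all of G
  have hresG : D \ C ⊆ G := by
    intro i hi
    rcases hDsub hi.1 with h | h
    · exact h
    · exact absurd h hi.2
  obtain ⟨H, hH, htH, hHsub⟩ :=
    residue_circuit (X := C) hD htD (fun h => (hGS htG).2 h) (S₃ := S \ C)
      (fun i hi => ⟨hD.subset_ground hi.1, hi.2⟩)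
  have hHG : H ⊆ G := hHsub.trans hresG
  have hHeq : H = G := hG.eq_of_dep hH.dep hHG
  have hGD : G ⊆ D := by
    rw [← hHeq]
    exact hHsub.trans Set.diff_subset
  by_cases hDC : (D ∩ C).Nonempty
  · -- |G| < |D| ≤ c
    have hDdecomp : (D \ C) = G := subset_antisymm hresG (by
      intro i hi
      exact ⟨hGD hi, fun h => (hGS hi).2 h⟩)
    have h0 : D \ (D ∩ C) = D \ C := by
      ext i
      simp only [Set.mem_diff, Set.mem_inter_iff, not_and]
      tauto
    have h1 := Set.ncard_diff_add_ncard_of_subset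
      (Set.inter_subset_left (s := D) (t := C)) (Set.toFinite D)
    rw [h0] at h1
    have h2 : 1 ≤ (D ∩ C).ncard := hDC.ncard_pos (Set.toFinite _)
    have h3 : D.ncard ≤ c := hmax D hD
    rw [hDdecomp] at h1
    omega
  · -- D = G : G is itself a circuit of (S, K)
    have hDG : D ⊆ G := by
      intro i hi
      rcases hDsub hi with h | h
      · exact h
      · exact absurd (Set.mem_inter hi h) (by
          rw [Set.not_nonempty_iff_eq_empty] at hDC
          rw [hDC]; exact id)
    have hDeq : D = G := subset_antisymm hDG hGD
    have hGcirc : circuitOn w K S G := hDeq ▸ hD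
    have hGle : G.ncard ≤ c := hmax G hGcirc
    by_cases hGc : G.ncard = c
    · exfalso
      refine main_lemma hconn hmax hC hCc hGcirc hGc ?_ ?_
      · exact Set.disjoint_left.2 fun t htC htG => (hGS htG).2 htC
      · intro T hT hdep
        refine hG.2 T hT (depOn_ambient ?_ hdep)
        exact hT.subset.trans hGS
    · omega

/-- circuits of a one-element contraction are not longer -/
lemma contract_one_bound {c : ℕ} {c₁ : ι} (hc₁S : c₁ ∈ S)
    (hmax : ∀ D, circuitOn w K S D → D.ncard ≤ c) :
    ∀ D, circuitOn w (K ⊔ Submodule.span F {w c₁}) (S \ {c₁}) D → D.ncard ≤ c := by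
  intro D hD
  have hc₁D : c₁ ∉ D := fun h => (hD.subset_ground h).2 rfl
  obtain ⟨D', hD', hsub1, _⟩ :=
    lift_circuit_single hD hc₁D (hD.subset_ground.trans Set.diff_subset) hc₁S
  calc D.ncard ≤ D'.ncard := Set.ncard_le_ncard hsub1 (Set.toFinite _)
    _ ≤ c := hmax D' hD'

/-- removing one element from a circuit yields a circuit of the contraction -/
lemma circuit_contract_elt {c₁ : ι} (hC : circuitOn w K S C) (hc₁ : c₁ ∈ C)
    (hcard : 2 ≤ C.ncard) :
    circuitOn w (K ⊔ Submodule.span F {w c₁}) (S \ {c₁}) (C \ {c₁}) := by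
  classical
  obtain ⟨u, huspt, hulc⟩ := hC.exists_vec
  constructor
  · -- dependence
    set c' : ι → F := fun i => if i = c₁ then 0 else u i with hc'
    have hspt : spt c' = C \ {c₁} := by
      ext i
      rw [mem_spt]
      by_cases hi : i = c₁
      · subst hi; simp [hc']
      · simp only [hc', if_neg hi, Set.mem_diff, Set.mem_singleton_iff, hi, not_false_iff,
          and_true]
        rw [← huspt]; rfl
    have hlc : lc w c' ∈ K ⊔ Submodule.span F {w c₁} := by
      have hdiff : ∀ i, i ≠ c₁ → c' i = u i := fun i hi => by simp [hc', hi]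
      have heq := lc_single_diff (w := w) hdiff
      rw [heq]
      have hc'c₁ : c' c₁ = 0 := by simp [hc']
      rw [hc'c₁]
      refine Submodule.add_mem _ (Submodule.mem_sup_left hulc) ?_
      exact Submodule.mem_sup_right (Submodule.mem_span_singleton.2 ⟨0 - u c₁, rfl⟩)
    refine depOn_of_spt ?_ (c := c') (by rw [hspt]) ?_ hlc
    · intro i hi
      exact ⟨hC.subset_ground hi.1, hi.2⟩
    · intro h0
      have h3 : 1 ≤ (C \ {c₁}).ncard := by
        have := Set.ncard_diff_add_ncard_of_subset
          (Set.singleton_subset_iff.2 hc₁) (Set.toFinite C)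
        rw [Set.ncard_singleton] at this
        omega
      obtain ⟨y, hy⟩ := Set.nonempty_of_ncard_ne_zero
        (show (C \ {c₁}).ncard ≠ 0 by omega)
      have hy' : y ∈ spt c' := by rw [hspt]; exact hy
      rw [mem_spt, h0] at hy'
      simp at hy'
  · -- minimality
    intro B hB hdep
    rw [depOn_iff] at hdep
    obtain ⟨hBS, b, hbspt, hb0, hblc⟩ := hdep
    obtain ⟨t, htk⟩ := mem_sup_span_singleton_iff.1 hblc
    set b' : ι → F := fun i => if i = c₁ then -t else b i with hb'
    have hbc₁ : b c₁ = 0 := by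
      by_contra hne
      exact (hBS (hbspt hne)).2 rfl
    have hlcb' : lc w b' ∈ K := by
      have hdiff : ∀ i, i ≠ c₁ → b' i = b i := fun i hi => by simp [hb', hi]
      have heq := lc_single_diff (w := w) hdiff
      rw [heq]
      have : b' c₁ = -t := by simp [hb']
      rw [this, hbc₁]
      simpa [sub_eq_add_neg, neg_smul] using htk
    have hb'0 : b' ≠ 0 := by
      obtain ⟨y, hy⟩ := spt_nonempty hb0
      rw [mem_spt] at hy
      have hyc₁ : y ≠ c₁ := fun h => hy (h ▸ hbc₁)
      intro h0
      have := congrFun h0 y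
      simp only [hb', if_neg hyc₁, Pi.zero_apply] at this
      exact hy this
    have hsptb' : spt b' ⊆ B ∪ {c₁} := by
      intro i hi
      rw [mem_spt] at hi
      by_cases hic : i = c₁
      · exact Or.inr (by simp [hic])
      · refine Or.inl (hbspt ?_)
        rw [mem_spt]
        intro h0
        exact hi (by simp [hb', hic, h0])
    have hss : B ∪ {c₁} ⊂ C := by
      obtain ⟨y, hyB, hyNB⟩ := Set.exists_of_ssubset hB
      refine ⟨?_, fun hsub => ?_⟩
      · refine Set.union_subset (hB.subset.trans Set.diff_subset) (by simpa using hc₁)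
      · have : y ∈ B ∪ {c₁} := hsub hyB.1
        rcases this with h | h
        · exact hyNB h
        · exact hyB.2 h
    have hdep' : depOn w K S (spt b') :=
      depOn_of_spt ((hsptb'.trans hss.subset).trans hC.subset_ground) subset_rfl hb'0 hlcb'
    exact hC.2 (spt b') (lt_of_le_of_lt hsptb' hss) hdep'

end Tools7a

section Tools7b
variable {F : Type*} [Field F] {ι : Type*} [Fintype ι] {m : ℕ}
variable {w : ι → Fin m → F} {K : Submodule F (Fin m → F)} {S : Set ι}

/-- circuits in a side component (not containing the rest of the contracted
circuit) are strictly shorter -/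
lemma side_class_bound {c : ℕ} {c₁ : ι} {Cr : Set ι} {e : ι}
    (hc₁S : c₁ ∈ S) (hc₁Cr : c₁ ∈ Cr) (hCrS : Cr ⊆ S)
    (hmax : ∀ D, circuitOn w K S D → D.ncard ≤ c)
    (hHb : ∀ G, circuitOn w (K ⊔ SpanW w Cr) (S \ Cr) G → G.ncard ≤ c - 1)
    (hecls : ∀ g ∈ Cr \ {c₁},
      ¬ relOn w (K ⊔ Submodule.span F {w c₁}) (S \ {c₁}) e g) :
    ∀ G, circuitOn w (K ⊔ Submodule.span F {w c₁})
      {f ∈ S \ {c₁} | relOn w (K ⊔ Submodule.span F {w c₁}) (S \ {c₁}) e f} G →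
      G.ncard ≤ c - 1 := by
  classical
  set K₁ := K ⊔ Submodule.span F {w c₁} with hK₁
  set S₁ := S \ {c₁} with hS₁
  set T := {f ∈ S₁ | relOn w K₁ S₁ e f} with hT
  intro G hG
  by_contra hbig
  push_neg at hbig
  have hGT : G ⊆ T := hG.subset_ground
  have hTS₁ : T ⊆ S₁ := fun x hx => hx.1
  have hGS₁ : G ⊆ S₁ := hGT.trans hTS₁
  have hG₁ : circuitOn w K₁ S₁ G := circuitOn_ambient hGS₁ hG
  have hc₁G : c₁ ∉ G := fun h => (hGS₁ h).2 rfl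
  -- lift to a circuit of (S, K)
  obtain ⟨D', hD', hsub1, hsub2⟩ :=
    lift_circuit_single hG₁ hc₁G (hGS₁.trans Set.diff_subset) hc₁S
  have hD'c : D'.ncard ≤ c := hmax D' hD'
  have hc₁D' : c₁ ∉ D' := by
    intro hmem
    -- then |D'| ≥ |G| + 1 > c
    have : insert c₁ G ⊆ D' := Set.insert_subset hmem hsub1
    have h1 : (insert c₁ G).ncard = G.ncard + 1 := Set.ncard_insert_of_notMem hc₁G
      (Set.toFinite _)
    have h2 : (insert c₁ G).ncard ≤ D'.ncard := Set.ncard_le_ncard this (Set.toFinite _)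
    omega
  have hD'G : D' = G := by
    refine subset_antisymm ?_ hsub1
    intro i hi
    rcases hsub2 hi with h | h
    · exact h
    · rw [Set.mem_singleton_iff] at h
      subst h
      exact absurd hi hc₁D'
  -- G is a K-circuit of size exactly c
  have hGcirc : circuitOn w K S G := hD'G ▸ hD'
  have hGc : G.ncard = c := by
    have := hmax G hGcirc
    omega
  -- G misses Cr
  have hGCr : Disjoint G Cr := by
    rw [Set.disjoint_left]
    intro t htG htCr
    have htT := hGT htG
    have htc₁ : t ≠ c₁ := (hGS₁ htG).2
    exact hecls t ⟨htCr, htc₁⟩ htT.2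
  -- find a (K ⊔ SpanW Cr)-circuit inside G
  obtain ⟨u, huspt, hulc⟩ := hGcirc.exists_vec
  obtain ⟨t₀, ht₀⟩ := hGcirc.nonempty
  have hGS₂ : G ⊆ S \ Cr := fun x hx =>
    ⟨hGS₁ hx |>.1, Set.disjoint_left.1 hGCr hx⟩
  obtain ⟨G₂, hG₂, ht₀G₂, hG₂sub⟩ :=
    exists_circuit_of_vec' (S := S \ Cr) (by rw [huspt]; exact hGS₂)
      (Submodule.mem_sup_left hulc) (by rw [← huspt] at ht₀; exact ht₀)
  rw [huspt] at hG₂sub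
  have hG₂c : G₂.ncard ≤ c - 1 := hHb G₂ hG₂
  have hG₂ss : G₂ ⊂ G := by
    refine ⟨hG₂sub, fun hsub => ?_⟩
    have := Set.ncard_le_ncard hsub (Set.toFinite _)
    omega
  -- unfold the (K ⊔ SpanW Cr)-dependency of G₂ into a K-circuit
  obtain ⟨u₂, hu₂spt, hu₂lc⟩ := hG₂.exists_vec
  obtain ⟨a, haspt, halc⟩ := mem_sup_SpanW_iff.1 hu₂lc
  set cc : ι → F := u₂ - a with hcc
  have hcclc : lc w cc ∈ K := by rw [hcc, lc_sub]; exact halc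
  have hat : a t₀ = 0 := by
    by_contra hne
    exact Set.disjoint_left.1 hGCr ht₀ (haspt hne)
  have hcct : cc t₀ ≠ 0 := by
    have hut : u₂ t₀ ≠ 0 := by rw [← hu₂spt] at ht₀G₂; exact ht₀G₂
    simpa [hcc, hat] using hut
  have hccspt : spt cc ⊆ G₂ ∪ Cr := by
    intro i hi
    rw [mem_spt] at hi
    by_contra hiu
    rw [Set.mem_union] at hiu
    push_neg at hiu
    have h1 : u₂ i = 0 := by
      by_contra hne; exact hiu.1 (hu₂spt ▸ (hne : i ∈ spt u₂))
    have h2 : a i = 0 := by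
      by_contra hne; exact hiu.2 (haspt hne)
    exact hi (by simp [hcc, h1, h2])
  have hccS : spt cc ⊆ S :=
    hccspt.trans (Set.union_subset ((hG₂sub.trans hGS₁).trans Set.diff_subset) hCrS)
  obtain ⟨D'', hD'', htD'', hD''spt⟩ := exists_circuit_of_vec' hccS hcclc hcct
  -- take the residue modulo c₁
  have ht₀c₁ : t₀ ∉ ({c₁} : Set ι) := by
    simpa using (hGS₁ ht₀).2
  obtain ⟨H, hH, htH, hHsub⟩ :=
    residue_circuit (X := {c₁}) hD'' htD'' ht₀c₁ (S₃ := S₁)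
      (fun i hi => ⟨hD''.subset_ground hi.1, by simpa using hi.2⟩)
  rw [SpanW_singleton] at hH
  have hHsub2 : H ⊆ G₂ ∪ (Cr \ {c₁}) := by
    intro i hi
    have h1 := hHsub hi
    rcases (hD''spt.trans hccspt) h1.1 with h | h
    · exact Or.inl h
    · exact Or.inr ⟨h, h1.2⟩
  -- H lies in the component T
  have hrelt₀ : relOn w K₁ S₁ e t₀ := (hGT ht₀).2
  have hHT : H ⊆ T := by
    have h1 := circuit_subset_cls hH htH
    rw [hT]
    rw [cls_eq_of_rel hrelt₀]
    exact h1
  -- H avoids Cr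
  have hHG₂ : H ⊆ G₂ := by
    intro i hi
    rcases hHsub2 hi with h | h
    · exact h
    · exact absurd (hHT hi).2 (hecls i h)
  have hHss : H ⊂ G := lt_of_le_of_lt hHG₂ hG₂ss
  exact hG.2 H hHss (depOn_ambient (hHT.trans subset_rfl) hH.dep)

/-- triangle number arithmetic -/
lemma tri_step {n : ℕ} (hn : 1 ≤ n) : n + (n - 1) * n / 2 = n * (n + 1) / 2 := by
  obtain ⟨k, rfl⟩ := Nat.exists_eq_add_of_le hn
  have e1 : ((k * (k + 1)) / 2) * 2 = k * (k + 1) :=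
    Nat.div_mul_cancel (Nat.even_mul_succ_self k).two_dvd
  have e2 : (((k + 1) * (k + 2)) / 2) * 2 = (k + 1) * (k + 2) :=
    Nat.div_mul_cancel (Nat.even_mul_succ_self (k + 1)).two_dvd
  have e3 : (k + 1) * (k + 2) = k * (k + 1) + 2 * (k + 1) := by ring
  have e4 : 1 + k - 1 = k := by omega
  have e5 : (1 + k) * (1 + k + 1) = (k + 1) * (k + 2) := by ring
  have e6 : (1 + k - 1) * (1 + k) = k * (k + 1) := by rw [e4]; ring
  rw [e5, e6]
  omega

lemma tri_mono {a b : ℕ} (h : a ≤ b) : a * (a + 1) / 2 ≤ b * (b + 1) / 2 :=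
  Nat.div_le_div_right (Nat.mul_le_mul h (by omega))

lemma tri_pos {n : ℕ} (hn : 1 ≤ n) : 1 ≤ n * (n + 1) / 2 := by
  have h2 : 2 ≤ n * (n + 1) := le_trans (by omega) (Nat.mul_le_mul hn (le_refl (n + 1)))
  omega

end Tools7b

section Tools7c
variable {F : Type*} [Field F] {ι : Type*} [Fintype ι] {m : ℕ}
variable {w : ι → Fin m → F}

/-- sequential contraction of a circuit -/
lemma SEQ {c : ℕ}
    (HP : ∀ (S₀ : Set ι) (K₀ : Submodule F (Fin m → F)),
      (∀ D, circuitOn w K₀ S₀ D → D.ncard ≤ c - 1) →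
      CdLEr w S₀ K₀ ((c - 1) * c / 2)) :
    ∀ (k : ℕ) (S' : Set ι) (K' : Submodule F (Fin m → F)) (Cr : Set ι),
      Cr.ncard = k → connOn w K' S' → circuitOn w K' S' Cr →
      (∀ D, circuitOn w K' S' D → D.ncard ≤ c) →
      (∀ G, circuitOn w (K' ⊔ SpanW w Cr) (S' \ Cr) G → G.ncard ≤ c - 1) →
      CdLEr w S' K' (k + (c - 1) * c / 2) := by
  intro k
  induction k with
  | zero =>
      intro S' K' Cr hk _ hCr _ _
      exfalso
      have := hCr.nonempty.ncard_pos (Set.toFinite _)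
      omega
  | succ k ih =>
      intro S' K' Cr hk hconn hCr hHa hHb
      obtain ⟨c₁, hc₁⟩ := hCr.nonempty
      have hc₁S : c₁ ∈ S' := hCr.subset_ground hc₁
      set K₁ := K' ⊔ Submodule.span F {w c₁} with hK₁
      set S₁ := S' \ {c₁} with hS₁
      have hgoal : CdLEr w S₁ K₁ (k + (c - 1) * c / 2) →
          CdLEr w S' K' (k + 1 + (c - 1) * c / 2) := by
        intro h
        have h2 := CdLEr.contr S' K' (k + (c - 1) * c / 2) c₁ hconn hc₁S h
        have h3 : k + (c - 1) * c / 2 + 1 = k + 1 + (c - 1) * c / 2 := by omega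
        rwa [h3] at h2
      by_cases hk0 : k = 0
      · -- Cr = {c₁}
        subst hk0
        have hCreq : Cr = {c₁} := by
          obtain ⟨a, ha⟩ := Set.ncard_eq_one.1 hk
          subst ha
          rw [Set.mem_singleton_iff] at hc₁
          rw [hc₁]
        apply hgoal
        have hHb' : ∀ D, circuitOn w K₁ S₁ D → D.ncard ≤ c - 1 := by
          intro D hD
          refine hHb D ?_
          rw [hCreq, SpanW_singleton]
          exact hD
        exact CdLEr_mono (HP S₁ K₁ hHb') (by omega)
      · -- k ≥ 1
        set Cr' := Cr \ {c₁} with hCr'def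
        have hCr'card : Cr'.ncard = k := by
          have h5 := Set.ncard_diff_add_ncard_of_subset
            (Set.singleton_subset_iff.2 hc₁) (Set.toFinite Cr)
          rw [Set.ncard_singleton] at h5
          rw [hCr'def]
          omega
        have hCr2 : 2 ≤ Cr.ncard := by omega
        have hCr'circ : circuitOn w K₁ S₁ Cr' := circuit_contract_elt hCr hc₁ hCr2
        have hHa₁ : ∀ D, circuitOn w K₁ S₁ D → D.ncard ≤ c :=
          contract_one_bound hc₁S hHa
        have hins : insert c₁ Cr' = Cr := by
          rw [hCr'def, Set.insert_diff_singleton, Set.insert_eq_self.2 hc₁]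
        have hKeq : K₁ ⊔ SpanW w Cr' = K' ⊔ SpanW w Cr := by
          rw [← hins, SpanW_insert, hK₁, sup_assoc]
        have hSeq : S₁ \ Cr' = S' \ Cr := by
          rw [hS₁, hCr'def]
          ext x
          simp only [Set.mem_diff, Set.mem_singleton_iff]
          constructor
          · rintro ⟨⟨hx, hxc⟩, hx2⟩
            refine ⟨hx, fun hxCr => hx2 ⟨hxCr, hxc⟩⟩
          · rintro ⟨hx, hx2⟩
            refine ⟨⟨hx, fun h => hx2 (h ▸ hc₁)⟩, fun h => hx2 h.1⟩
        have hHb₁ : ∀ G, circuitOn w (K₁ ⊔ SpanW w Cr') (S₁ \ Cr') G →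
            G.ncard ≤ c - 1 := by
          rw [hKeq, hSeq]
          exact hHb
        by_cases hcon₁ : connOn w K₁ S₁
        · exact hgoal (ih S₁ K₁ Cr' hCr'card hcon₁ hCr'circ hHa₁ hHb₁)
        · apply hgoal
          refine CdLEr.comp S₁ K₁ _ hcon₁ fun e he => ?_
          obtain ⟨c₂, hc₂⟩ := hCr'circ.nonempty
          by_cases hrel : relOn w K₁ S₁ e c₂
          · -- the component containing the remaining circuit
            have hclssub : Cr' ⊆ {f ∈ S₁ | relOn w K₁ S₁ e f} := by
              intro g hg
              exact ⟨hCr'circ.subset_ground hg,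
                relOn_trans hrel (relOn_of_circuit hCr'circ hc₂ hg)⟩
            have hTsub : {f ∈ S₁ | relOn w K₁ S₁ e f} ⊆ S₁ := fun x hx => hx.1
            refine ih _ K₁ Cr' hCr'card (connOn_cls e)
              (circuitOn_ambient hclssub hCr'circ) ?_ ?_
            · intro D hD
              exact hHa₁ D (circuitOn_ambient (hD.subset_ground.trans hTsub) hD)
            · intro G hG
              refine hHb₁ G (circuitOn_ambient ?_ hG)
              exact hG.subset_ground.trans fun x hx => ⟨hTsub hx.1, hx.2⟩
          · -- side component
            have hecls : ∀ g ∈ Cr \ {c₁}, ¬ relOn w K₁ S₁ e g := by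
              intro g hg hrelg
              exact hrel (relOn_trans hrelg
                (relOn_of_circuit hCr'circ (by exact hg) hc₂))
            have hside := side_class_bound hc₁S hc₁ hCr.subset_ground hHa hHb hecls
            exact CdLEr_mono (HP _ K₁ hside) (by omega)

/-- the bound cd ≤ c(c+1)/2 -/
lemma P_bound : ∀ (n : ℕ), 1 ≤ n → ∀ (k : ℕ) (S : Set ι) (K : Submodule F (Fin m → F)),
    S.ncard ≤ k → (∀ D, circuitOn w K S D → D.ncard ≤ n) →
    CdLEr w S K (n * (n + 1) / 2) := by
  intro n
  induction n using Nat.strong_induction_on with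
  | _ n ihn =>
    intro hn k
    induction k with
    | zero =>
        intro S K hk _
        refine CdLEr.empty S K _ ?_
        rw [← Set.ncard_eq_zero (Set.toFinite S)]
        omega
    | succ k ihk =>
        intro S K hk hcirc
        by_cases hS : S = ∅
        · exact CdLEr.empty S K _ hS
        by_cases hconn : connOn w K S
        · by_cases hpair : ∃ a ∈ S, ∃ b ∈ S, a ≠ b
          · -- connected with at least two elements : find a maximum circuit
            obtain ⟨a, ha, b, hb, hab⟩ := hpair
            have hrel := hconn a ha b hb
            have hE₀ : ∃ E, circuitOn w K S E ∧ a ∈ E ∧ b ∈ E := by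
              rcases hrel with h | h
              · exact absurd h hab
              · exact h
            obtain ⟨E₀, hE₀, haE₀, hbE₀⟩ := hE₀
            set cs : Set ℕ := {j | ∃ D, circuitOn w K S D ∧ D.ncard = j} with hcs
            have hcsne : cs.Nonempty := ⟨E₀.ncard, E₀, hE₀, rfl⟩
            have hcsbdd : BddAbove cs := by
              refine ⟨n, fun j hj => ?_⟩
              obtain ⟨D, hD, rfl⟩ := hj
              exact hcirc D hD
            obtain ⟨C, hC, hCc⟩ := Nat.sSup_mem hcsne hcsbdd
            set c : ℕ := sSup cs with hc
            have hcmax : ∀ D, circuitOn w K S D → D.ncard ≤ c := by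
              intro D hD
              exact le_csSup hcsbdd ⟨D, hD, rfl⟩
            have hc2 : 2 ≤ c := by
              have h1 : 1 < E₀.ncard := by
                rw [Set.one_lt_ncard_iff (Set.toFinite _)]
                exact ⟨a, b, haE₀, hbE₀, hab⟩
              exact le_trans h1 (hcmax E₀ hE₀)
            have hcn : c ≤ n := by
              rw [← hCc]
              exact hcirc C hC
            have hHb := contract_circuit_bound hconn hcmax hC hCc
            have HP : ∀ (S₀ : Set ι) (K₀ : Submodule F (Fin m → F)),
                (∀ D, circuitOn w K₀ S₀ D → D.ncard ≤ c - 1) →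
                CdLEr w S₀ K₀ ((c - 1) * c / 2) := by
              intro S₀ K₀ h₀
              have h1 := ihn (c - 1) (by omega) (by omega) S₀.ncard S₀ K₀ le_rfl h₀
              have h2 : (c - 1) * ((c - 1) + 1) = (c - 1) * c := by
                congr 1
                omega
              rwa [h2] at h1
            have hseq := SEQ HP c S K C hCc hconn hC hcmax hHb
            have htri : c + (c - 1) * c / 2 = c * (c + 1) / 2 := tri_step (by omega)
            rw [htri] at hseq
            exact CdLEr_mono hseq (tri_mono hcn)
          · -- singleton
            push_neg at hpair
            obtain ⟨e, he⟩ := Set.nonempty_iff_ne_empty.2 hS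
            have hSe : S = {e} := by
              ext x
              constructor
              · intro hx
                rw [Set.mem_singleton_iff]
                by_contra hne
                exact hne (hpair x hx e he)
              · rintro rfl
                exact he
            have h1 := CdLEr.single (w := w) S K (n * (n + 1) / 2 - 1) e hSe
            have h2 : n * (n + 1) / 2 - 1 + 1 = n * (n + 1) / 2 := by
              have := tri_pos hn
              omega
            rwa [h2] at h1
        · -- disconnected
          refine CdLEr.comp S K _ hconn fun e he => ?_
          have hcls := cls_ssubset hconn he
          have hcard : {f ∈ S | relOn w K S e f}.ncard ≤ k := by
            have := Set.ncard_lt_ncard hcls (Set.toFinite _)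
            omega
          refine ihk _ _ hcard ?_
          intro D hD
          exact hcirc D (circuitOn_ambient (hD.subset_ground.trans fun x hx => hx.1) hD)

end Tools7c

/-!
STATEMENT 12: contraction-depth and contraction*-depth are functionally
equivalent: for every represented matroid `M`,
`csd(M) ≤ cd(M) ≤ (1/2)(2^(2·csd(M)) + 2^(csd(M)))`.
-/
theorem stmt12 {F : Type*} [Field F] {ι : Type*} [Fintype ι] {m : ℕ}
    (w : ι → Fin m → F) :
    csdR w Set.univ ⊥ ≤ cdR w Set.univ ⊥ ∧
      cdR w Set.univ ⊥ ≤
        (2 ^ (2 * csdR w Set.univ ⊥) + 2 ^ csdR w Set.univ ⊥) / 2 := by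
  classical
  constructor
  · -- csd ≤ cd
    obtain ⟨d₀, hd₀⟩ := cd_nonempty (w := w) Set.univ ⊥
    have hmem : CdLEr w Set.univ ⊥ (cdR w Set.univ ⊥) := Nat.sInf_mem ⟨d₀, hd₀⟩
    exact Nat.sInf_le (cd_to_csd hmem)
  · obtain ⟨d₁, hd₁⟩ := csd_nonempty (w := w) Set.univ ⊥
    have hmem : CsdLE w Set.univ ⊥ (csdR w Set.univ ⊥) := Nat.sInf_mem ⟨d₁, hd₁⟩
    set d := csdR w Set.univ ⊥ with hd
    have hcircs : ∀ D, circuitOn w ⊥ Set.univ D → D.ncard ≤ 2 ^ d := circuit_bound hmem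
    have h1 : CdLEr w Set.univ ⊥ (2 ^ d * (2 ^ d + 1) / 2) :=
      P_bound (2 ^ d) Nat.one_le_two_pow (Set.univ : Set ι).ncard Set.univ ⊥ le_rfl hcircs
    have h2 : cdR w Set.univ ⊥ ≤ 2 ^ d * (2 ^ d + 1) / 2 := Nat.sInf_le h1
    have h3 : 2 ^ d * (2 ^ d + 1) = 2 ^ (2 * d) + 2 ^ d := by
      rw [two_mul, pow_add]
      ring
    rw [← h3]
    exact h2
end

section
/- A subset S of the ground set of a matroid M is a connected component of M if and only if S is a connected component of the dual matroid M^*. -/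
open Matroid

/-- A circuit of a matroid: a minimal dependent set. -/
def IsCircuitM {α : Type*} (M : Matroid α) (C : Set α) : Prop :=
  M.Dep C ∧ ∀ D ⊂ C, M.Indep D

/-- `e` and `f` lie in a common circuit (with `e = f` allowed for ground
elements). -/
def ConnTo {α : Type*} (M : Matroid α) (e f : α) : Prop :=
  (e ∈ M.E ∧ e = f) ∨ ∃ C, IsCircuitM M C ∧ e ∈ C ∧ f ∈ C

/-- A matroid is connected if every two of its elements lie in a common
circuit. -/
def ConnM {α : Type*} (M : Matroid α) : Prop :=
  ∀ e ∈ M.E, ∀ f ∈ M.E, ConnTo M e f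

/-- The connected component of an element `e`. -/
def compOf {α : Type*} (M : Matroid α) (e : α) : Set α := {f | ConnTo M e f}

/-- `S` is a connected component of `M`. -/
def IsComponentM {α : Type*} (M : Matroid α) (S : Set α) : Prop :=
  ∃ e ∈ M.E, S = compOf M e

/-- Deletion of a single element. -/
def mdelete {α : Type*} (M : Matroid α) (e : α) : Matroid α :=
  M ↾ (M.E \ {e})

/-- Contraction of a single element (via duality with deletion). -/
def mcontract {α : Type*} (M : Matroid α) (e : α) : Matroid α :=
  (mdelete M✶ e)✶

/-- `CdLE M d` means that the contraction-depth of `M` is at most `d`: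
`cd` of a single-element matroid is `1`; for a disconnected matroid it is the
maximum over components; for a connected matroid it is `1` plus the minimum
over single-element contractions. -/
inductive CdLE {α : Type*} : Matroid α → ℕ → Prop
  | empty (M : Matroid α) (d : ℕ) : M.E = ∅ → CdLE M d
  | single (M : Matroid α) (d : ℕ) (e : α) : M.E = {e} → CdLE M (d + 1)
  | comp (M : Matroid α) (d : ℕ) : ¬ ConnM M →
      (∀ e ∈ M.E, CdLE (M ↾ compOf M e) d) → CdLE M d
  | contr (M : Matroid α) (d : ℕ) (e : α) : ConnM M → e ∈ M.E →
      CdLE (mcontract M e) d → CdLE M (d + 1)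

/-- `DdLE M d` means that the deletion-depth of `M` is at most `d`. -/
inductive DdLE {α : Type*} : Matroid α → ℕ → Prop
  | empty (M : Matroid α) (d : ℕ) : M.E = ∅ → DdLE M d
  | single (M : Matroid α) (d : ℕ) (e : α) : M.E = {e} → DdLE M (d + 1)
  | comp (M : Matroid α) (d : ℕ) : ¬ ConnM M →
      (∀ e ∈ M.E, DdLE (M ↾ compOf M e) d) → DdLE M d
  | contr (M : Matroid α) (d : ℕ) (e : α) : ConnM M → e ∈ M.E →
      DdLE (mdelete M e) d → DdLE M (d + 1)

/-- The contraction-depth of a matroid. -/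
noncomputable def cdepth {α : Type*} (M : Matroid α) : ℕ := sInf {d | CdLE M d}

/-- The deletion-depth of a matroid. -/
noncomputable def ddepth {α : Type*} (M : Matroid α) : ℕ := sInf {d | DdLE M d}

/-!
STATEMENT 15: A subset `S` of the ground set of a matroid `M` is a connected
component of `M` iff it is a connected component of the dual matroid `M✶`.
-/
open Set

lemma exists_circuit_subset {α : Type*} {M : Matroid α} {D : Set α} (hfin : D.Finite)
    (hD : M.Dep D) : ∃ C ⊆ D, IsCircuitM M C := by
  have hsfin : {D' : Set α | D' ⊆ D ∧ M.Dep D'}.Finite :=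
    hfin.finite_subsets.subset (fun D' h => h.1)
  obtain ⟨C, hCmem, hCmin⟩ := Set.Finite.exists_minimalFor id _ hsfin ⟨D, Subset.rfl, hD⟩
  refine ⟨C, hCmem.1, hCmem.2, fun D' hss => ?_⟩
  by_contra hind
  have hdep : M.Dep D' := ⟨hind, hss.subset.trans hCmem.2.subset_ground⟩
  exact hss.2 (hCmin ⟨hss.subset.trans hCmem.1, hdep⟩ hss.subset)

lemma circuit_cocircuit_inter_ne_singleton {α : Type*} {M : Matroid α} {C C' : Set α} {x : α}
    (hC : IsCircuitM M C) (hC' : IsCircuitM M✶ C') : C ∩ C' ≠ {x} := by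
  intro h
  have hxC : x ∈ C := (h.symm.subset rfl).1
  have hxC' : x ∈ C' := (h.symm.subset rfl).2
  have hCE : C ⊆ M.E := hC.1.subset_ground
  have hC'E : C' ⊆ M.E := hC'.1.subset_ground
  have hCx : M.Indep (C \ {x}) := hC.2 _ (sdiff_singleton_ssubset.2 hxC)
  have hxcl : x ∈ M.closure (C \ {x}) := by
    have hd : M.Dep (insert x (C \ {x})) := by
      rw [insert_diff_singleton, insert_eq_of_mem hxC]; exact hC.1
    exact (hCx.insert_dep_iff.1 hd).1
  have hsub : C \ {x} ⊆ M.E \ C' := by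
    rintro y ⟨hyC, hyx⟩
    exact ⟨hCE hyC, fun hyC' => hyx (h.subset ⟨hyC, hyC'⟩)⟩
  have hxcl2 : x ∈ M.closure (M.E \ C') := M.closure_subset_closure hsub hxcl
  have hC'x : M✶.Indep (C' \ {x}) := hC'.2 _ (sdiff_singleton_ssubset.2 hxC')
  have hco : M.Coindep (C' \ {x}) := coindep_def.2 hC'x
  have hspan : M.Spanning (M.E \ (C' \ {x})) := hco.compl_spanning
  have hsub2 : M.E \ (C' \ {x}) ⊆ M.closure (M.E \ C') := by
    rintro y ⟨hyE, hy⟩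
    by_cases hyx : y = x
    · rwa [hyx]
    · exact M.subset_closure (M.E \ C') diff_subset ⟨hyE, fun hyC' => hy ⟨hyC', hyx⟩⟩
  have hcl : M.closure (M.E \ C') = M.E := by
    have h1 : M.closure (M.E \ (C' \ {x})) ⊆ M.closure (M.E \ C') := by
      rw [← M.closure_closure (M.E \ C')]
      exact M.closure_subset_closure hsub2
    rw [hspan.closure_eq] at h1
    exact subset_antisymm (M.closure_subset_ground _) h1
  exact hC'.1.not_indep (coindep_def.1 ((coindep_iff_closure_compl_eq_ground hC'E).2 hcl))

lemma connTo_dual {α : Type*} {M : Matroid α} [M.Finite] {e f : α}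
    (h : ConnTo M e f) : ConnTo M✶ e f := by
  rcases h with ⟨heE, rfl⟩ | ⟨C, hC, heC, hfC⟩
  · exact Or.inl ⟨heE, rfl⟩
  have hCE : C ⊆ M.E := hC.1.subset_ground
  by_cases hef : e = f
  · exact Or.inl ⟨hCE heC, hef⟩
  -- extend C \ {e} to a base B
  have hCe : M.Indep (C \ {e}) := hC.2 _ (Set.sdiff_singleton_ssubset.2 heC)
  obtain ⟨B, hB, hCB⟩ := hCe.exists_isBase_superset
  have heB : e ∉ B := fun heB => hC.1.not_indep (hB.indep.subset (fun x hx => by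
    by_cases hxe : x = e
    · rwa [hxe]
    · exact hCB ⟨hx, hxe⟩))
  have hfB : f ∈ B := hCB ⟨hfC, fun hfe => hef (by rwa [Set.mem_singleton_iff, eq_comm] at hfe)⟩
  -- dual base
  have hB' : M✶.IsBase (M.E \ B) := by
    rw [dual_isBase_iff, Set.diff_diff_cancel_left hB.subset_ground]; exact hB
  have hfE : f ∈ M.E := hCE hfC
  have hdep : M✶.Dep (insert f (M.E \ B)) :=
    hB'.insert_dep ⟨hfE, fun hf => hf.2 hfB⟩
  have hfin : (insert f (M.E \ B)).Finite :=
    M.ground_finite.subset (Set.insert_subset hfE Set.diff_subset)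
  obtain ⟨C', hC'sub, hC'⟩ := exists_circuit_subset hfin hdep
  have hfC' : f ∈ C' := by
    by_contra hfC'
    exact hC'.1.not_indep (hB'.indep.subset (fun x hx =>
      ((hC'sub hx).resolve_left (fun hxf => hfC' (hxf ▸ hx)))))
  have heC' : e ∈ C' := by
    by_contra heC'
    apply circuit_cocircuit_inter_ne_singleton hC hC' (x := f)
    refine Set.eq_singleton_iff_unique_mem.2 ⟨⟨hfC, hfC'⟩, ?_⟩
    rintro x ⟨hxC, hxC'⟩
    by_contra hxf
    have hxB' : x ∈ M.E \ B := (hC'sub hxC').resolve_left hxf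
    have hxe : x ≠ e := fun hxe => heC' (hxe ▸ hxC')
    exact hxB'.2 (hCB ⟨hxC, hxe⟩)
  exact Or.inr ⟨C', hC', heC', hfC'⟩


theorem stmt15 {α : Type*} (M : Matroid α) [M.Finite] (S : Set α) :
    IsComponentM M S ↔ IsComponentM M✶ S := by
  have key : ∀ e, compOf M e = compOf M✶ e := fun e => by
    ext f
    constructor
    · exact fun h => connTo_dual h
    · intro h
      have := connTo_dual (M := M✶) h
      rwa [dual_dual] at this
  constructor
  · rintro ⟨e, he, rfl⟩
    exact ⟨e, he, key e⟩
  · rintro ⟨e, he, rfl⟩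
    exact ⟨e, he, (key e).symm⟩
end

section
/- Let T be a labelled rooted tree encoding a matrix (a (d,F)-matrix-tree), v a vertex of T, T' = T − T_v the tree with the subtree rooted at v removed, and T'' the tree obtained from T by removing only the leaves of T_v labelled as columns. Then in the matrix A(T''), every row corresponding to a vertex of T_v is the zero row; consequently the vector matroids M(A(T')) and M(A(T'')) are isomorphic. -/
/-!
A nonzero entry `A r c` forces `r` to be an ancestor of `c`, so a row `r` inside the subtree
`T_v` can only meet columns inside `T_v`. Once those columns are removed, the rows of `T_v` are
zero, and zero rows impose no condition on a linear dependence among the remaining columns.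
-/

theorem entry_eq_zero_of_mem_subtree {V F : Type*} [Zero F] (anc : V → V → Prop)
    (htrans : ∀ u v w, anc u v → anc v w → anc u w) (R C : Set V) (A : V → V → F)
    (hA : ∀ r ∈ R, ∀ c ∈ C, A r c ≠ 0 → anc r c) (v : V) :
    ∀ r ∈ R ∩ {u | anc v u}, ∀ c ∈ C \ {u | anc v u}, A r c = 0 := by
  rintro r ⟨hrR, hvr⟩ c ⟨hcC, hvc⟩
  by_contra hrc
  exact hvc (htrans v r c hvr (hA r hrR c hcC hrc))

theorem sum_mul_eq_zero_of_eq_zero_on {V F : Type*} [Fintype V]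
    [NonUnitalNonAssocSemiring F] (S : Set V) (coef a : V → F) (hcoef : ∀ c, c ∉ S → coef c = 0)
    (ha : ∀ c ∈ S, a c = 0) : ∑ c, coef c * a c = 0 := by
  refine Finset.sum_eq_zero fun c _ => ?_
  by_cases hc : c ∈ S
  · rw [ha c hc, mul_zero]
  · rw [hcoef c hc, zero_mul]

theorem forall_mem_diff_iff_forall_mem {V : Type*} (R Z : Set V) (p : V → Prop)
    (hZ : ∀ r ∈ R ∩ Z, p r) : (∀ r ∈ R \ Z, p r) ↔ ∀ r ∈ R, p r := by
  refine ⟨fun h r hr => ?_, fun h r hr => h r hr.1⟩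
  by_cases hrZ : r ∈ Z
  · exact hZ r ⟨hr, hrZ⟩
  · exact h r ⟨hr, hrZ⟩

theorem stmt19_general {V : Type*} [Fintype V] {F : Type*} [Field F]
    (anc : V → V → Prop)
    (htrans : ∀ u v w, anc u v → anc v w → anc u w)
    (R C : Set V)
    (A : V → V → F)
    (hA : ∀ r ∈ R, ∀ c ∈ C, A r c ≠ 0 → anc r c)
    (v : V) :
    -- every row of `A(T'')` corresponding to a vertex of `T_v` is zero:
    (∀ r ∈ R ∩ {u | anc v u}, ∀ c ∈ C \ {u | anc v u}, A r c = 0) ∧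
    -- hence `M(A(T'))` and `M(A(T''))` are isomorphic (the identity on the
    -- common column set `C \ T_v` preserves linear dependence):
    ∀ coef : V → F, (∀ c, c ∉ C \ {u | anc v u} → coef c = 0) →
      ((∀ r ∈ R \ {u | anc v u}, (∑ c, coef c * A r c) = 0) ↔
        (∀ r ∈ R, (∑ c, coef c * A r c) = 0)) := by
  have hzero := entry_eq_zero_of_mem_subtree anc htrans R C A hA v
  refine ⟨hzero, fun coef hcoef => forall_mem_diff_iff_forall_mem R _ _ fun r hr => ?_⟩
  exact sum_mul_eq_zero_of_eq_zero_on _ coef (A r) hcoef (hzero r hr)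

theorem stmt19 {V : Type*} [Fintype V] {F : Type*} [Field F]
    (anc : V → V → Prop)
    (hrefl : ∀ u, anc u u)
    (htrans : ∀ u v w, anc u v → anc v w → anc u w)
    (R C : Set V) (hRC : Disjoint R C)
    (A : V → V → F)
    (hA : ∀ r ∈ R, ∀ c ∈ C, A r c ≠ 0 → anc r c)
    (v : V) :
    -- every row of `A(T'')` corresponding to a vertex of `T_v` is zero:
    (∀ r ∈ R ∩ {u | anc v u}, ∀ c ∈ C \ {u | anc v u}, A r c = 0) ∧
    -- hence `M(A(T'))` and `M(A(T''))` are isomorphic (the identity on the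
    -- common column set `C \ T_v` preserves linear dependence):
    ∀ coef : V → F, (∀ c, c ∉ C \ {u | anc v u} → coef c = 0) →
      ((∀ r ∈ R \ {u | anc v u}, (∑ c, coef c * A r c) = 0) ↔
        (∀ r ∈ R, (∑ c, coef c * A r c) = 0)) :=
  stmt19_general anc htrans R C A hA v
end
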